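/- arXiv:2211.17176 — 2 statements merged into one kernel-verified Lean document; each statement's English description precedes it below -/
import Mathlib

section
/- Let Ω = (a,b) be a non-empty bounded open interval and let 1 ≤ p < ∞. Let ε_n be a sequence of positive reals with ε_n → 0⁺. If u_n ∈ W^{1,p}(Ω) is a sequence with C := sup_{n∈ℕ} ∫_Ω ε_n^{-1}(u_n²−1)² + ε_n|u_n'|² dx < ∞, then there exists a subsequence u_{n_k} and a function u ∈ BPV(Ω;{−1,1}) such that u_{n_k} → u in L^p(Ω). -/
open MeasureTheory Set Filter Topology
open scoped ENNReal NNReal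

noncomputable section

/-- `u` (together with chosen derivative functions `u'`, `u''`) belongs to the Sobolev
space `W^{2,q}` of the set `s ⊆ ℝ`, encoded through the `ACL` characterization:
`u` is differentiable on `s` with derivative `u'`, `u'` is (locally) absolutely
continuous on `s` with density `u''`, and `u, u', u'' ∈ L^q(s)`. -/
def IsW2On (s : Set ℝ) (q : ℝ≥0∞) (u u' u'' : ℝ → ℝ) : Prop :=
  (∀ x ∈ s, HasDerivAt u (u' x) x) ∧
  (∀ x ∈ s, ∀ y ∈ s, Set.uIcc x y ⊆ s → u' y - u' x = ∫ t in x..y, u'' t) ∧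
  MeasureTheory.MemLp u q (volume.restrict s) ∧
  MeasureTheory.MemLp u' q (volume.restrict s) ∧
  MeasureTheory.MemLp u'' q (volume.restrict s)

/-- `W^{1,q}` of a set `s ⊆ ℝ`, via the ACL characterization: `u` is (locally)
absolutely continuous on `s` with density `u'`, and `u, u' ∈ L^q(s)`. -/
def IsW1On (s : Set ℝ) (q : ℝ≥0∞) (u u' : ℝ → ℝ) : Prop :=
  (∀ x ∈ s, ∀ y ∈ s, Set.uIcc x y ⊆ s → u y - u x = ∫ t in x..y, u' t) ∧
  MeasureTheory.MemLp u q (volume.restrict s) ∧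
  MeasureTheory.MemLp u' q (volume.restrict s)

/-- The essential pointwise variation of `u` on `s`: the infimum of the pointwise
variations of all representatives of `u`. -/
def essVar (s : Set ℝ) (u : ℝ → ℝ) : ℝ≥0∞ :=
  ⨅ (v : ℝ → ℝ) (_ : v =ᵐ[volume.restrict s] u), eVariationOn v s

/-- Convergence `u n → v` in `L^p(s)`. -/
def TendstoLp (s : Set ℝ) (p : ℝ) (u : ℕ → ℝ → ℝ) (v : ℝ → ℝ) : Prop :=
  Tendsto (fun n => eLpNorm (fun x => u n x - v x) (ENNReal.ofReal p)
    (volume.restrict s)) atTop (𝓝 0)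

/-- The functional `Φ(v) = (∫₀¹ (v²-1)² dy)^{3/4} (∫₀¹ |v''|² dy)^{1/4}`. -/
def PhiE (v v'' : ℝ → ℝ) : ℝ≥0∞ :=
  (∫⁻ y in Set.Ioo (0:ℝ) 1, ENNReal.ofReal (((v y) ^ 2 - 1) ^ 2)) ^ ((3:ℝ)/4) *
  (∫⁻ y in Set.Ioo (0:ℝ) 1, ENNReal.ofReal ((v'' y) ^ 2)) ^ ((1:ℝ)/4)

/-- The set of values of `Φ` on the family `𝒥`. -/
def JVals (p : ℝ) : Set ℝ≥0∞ :=
  {r | ∃ v v' v'' : ℝ → ℝ, IsW2On (Set.Ioo 0 1) (ENNReal.ofReal p) v v' v'' ∧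
    Tendsto v (𝓝[>] (0:ℝ)) (𝓝 (-1)) ∧ Tendsto v (𝓝[<] (1:ℝ)) (𝓝 1) ∧
    Tendsto v' (𝓝[>] (0:ℝ)) (𝓝 0) ∧ Tendsto v' (𝓝[<] (1:ℝ)) (𝓝 0) ∧
    r = PhiE v v''}

/-- `α = (2/3^{3/4}) inf_{v ∈ 𝒥} Φ(v)`. -/
def alphaE (p : ℝ) : ℝ≥0∞ := ENNReal.ofReal (2 / (3:ℝ) ^ ((3:ℝ)/4)) * sInf (JVals p)

/-- The set of values of `Φ` on the family `𝒥'(t)`. -/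
def JpVals (p t : ℝ) : Set ℝ≥0∞ :=
  {r | ∃ v v' v'' : ℝ → ℝ, IsW2On (Set.Ioo 0 1) (ENNReal.ofReal p) v v' v'' ∧
    Tendsto v (𝓝[>] (0:ℝ)) (𝓝 (-1)) ∧ Tendsto v (𝓝[<] (1:ℝ)) (𝓝 t) ∧
    Tendsto v' (𝓝[>] (0:ℝ)) (𝓝 0) ∧
    r = PhiE v v''}

/-- `β(t) = (4/3^{3/4}) inf_{v ∈ 𝒥'(t)} Φ(v)`, as an extended real. -/
def betaE (p t : ℝ) : ℝ≥0∞ := ENNReal.ofReal (4 / (3:ℝ) ^ ((3:ℝ)/4)) * sInf (JpVals p t)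

/-- `Ψ(v) = ∫_{-∞}^0 (v²-1)² + |v''|² dx`. -/
def PsiE (v v'' : ℝ → ℝ) : ℝ≥0∞ :=
  ∫⁻ x in Set.Iio (0:ℝ), ENNReal.ofReal (((v x) ^ 2 - 1) ^ 2 + (v'' x) ^ 2)

/-- Membership in the family `𝒥'_∞(t)`: `v ∈ W^{2,∞}(-∞,0)`, `v(0⁻) = t`, and
`v ≡ -1` near `-∞`. -/
def MemJInf (t : ℝ) (v v' v'' : ℝ → ℝ) : Prop :=
  IsW2On (Set.Iio 0) ⊤ v v' v'' ∧ Tendsto v (𝓝[<] (0:ℝ)) (𝓝 t) ∧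
  ∃ L > (0:ℝ), ∀ x ≤ -L, v x = -1

/-- The set of values of `Ψ` on the family `𝒥'_∞(t)`. -/
def PsiVals (t : ℝ) : Set ℝ≥0∞ :=
  {r | ∃ v v' v'' : ℝ → ℝ, MemJInf t v v' v'' ∧ r = PsiE v v''}

/-- The set of values of `Ψ` on `{v ∈ 𝒥'_∞(t) : L_v ≤ Lmax}`. -/
def PsiValsL (t Lmax : ℝ) : Set ℝ≥0∞ :=
  {r | ∃ v v' v'' : ℝ → ℝ, MemJInf t v v' v'' ∧ (∀ x ≤ -Lmax, v x = -1) ∧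
    r = PsiE v v''}

/-- The functional `F_ε` on `L^p((a,b))`: the common value of
`∫ ε⁻¹(v²-1)² + ε³|v''|²` over all `W^{2,p}` representatives `v` of `u`
(`+∞`, i.e. `sInf ∅`, when there is no such representative). -/
def Ffun (a b p ε : ℝ) (u : ℝ → ℝ) : ℝ≥0∞ :=
  sInf {r : ℝ≥0∞ | ∃ v v' v'' : ℝ → ℝ, v =ᵐ[volume.restrict (Set.Ioo a b)] u ∧
    IsW2On (Set.Ioo a b) (ENNReal.ofReal p) v v' v'' ∧
    r = ∫⁻ x in Set.Ioo a b,
      ENNReal.ofReal (ε⁻¹ * ((v x) ^ 2 - 1) ^ 2 + ε ^ 3 * (v'' x) ^ 2)}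

/-- The functional `G_ε` on `L^p((a,b))`, with boundary conditions
`v(a⁺) = aε`, `v(b⁻) = bε` imposed on the `W^{2,p}` representative. -/
def Gfun (a b p ε aε bε : ℝ) (u : ℝ → ℝ) : ℝ≥0∞ :=
  sInf {r : ℝ≥0∞ | ∃ v v' v'' : ℝ → ℝ, v =ᵐ[volume.restrict (Set.Ioo a b)] u ∧
    IsW2On (Set.Ioo a b) (ENNReal.ofReal p) v v' v'' ∧
    Tendsto v (𝓝[>] a) (𝓝 aε) ∧ Tendsto v (𝓝[<] b) (𝓝 bε) ∧
    r = ∫⁻ x in Set.Ioo a b,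
      ENNReal.ofReal (ε⁻¹ * ((v x) ^ 2 - 1) ^ 2 + ε ^ 3 * (v'' x) ^ 2)}

lemma theta_segment {h Θ : ℝ → ℝ} (hc : Continuous h) (hnn : ∀ s, 0 ≤ h s)
    {B : ℝ} (hB : ∀ s, h s ≤ B)
    (hΘ : ∀ α β : ℝ, α ≤ β → |Θ β - Θ α| ≤ ∫ t in α..β, h t)
    {f g : ℝ → ℝ} {x y : ℝ} (hxy : x ≤ y)
    (hfc : ContinuousOn f (Icc x y))
    (hgi : IntegrableOn g (Icc x y))
    (hftc : ∀ z ∈ Icc x y, ∀ w ∈ Icc x y, f w - f z = ∫ t in z..w, g t) :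
    |Θ (f y) - Θ (f x)| ≤ ∫ t in x..y, h (f t) * |g t| := by
  rcases eq_or_lt_of_le hxy with rfl | hlt
  · simp
  have hfm : AEStronglyMeasurable (fun s => h (f s)) (volume.restrict (Icc x y)) :=
    ((hc.comp_continuousOn hfc).aestronglyMeasurable measurableSet_Icc)
  have hhfgi : IntegrableOn (fun s => h (f s) * |g s|) (Icc x y) := by
    refine (hgi.abs.const_mul B).mono (hfm.mul hgi.abs.aestronglyMeasurable) ?_
    refine ae_of_all _ (fun s => ?_)
    simp only [Real.norm_eq_abs, abs_mul, abs_abs]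
    have h0 : |h (f s)| ≤ |B| := by
      rw [abs_of_nonneg (hnn _)]; exact le_trans (hB _) (le_abs_self _)
    exact mul_le_mul_of_nonneg_right h0 (abs_nonneg _)
  set c : ℝ := (∫ t in x..y, |g t|) with hc_def
  have hgiv : IntervalIntegrable g volume x y :=
    (intervalIntegrable_iff_integrableOn_Icc_of_le hxy).2 hgi
  have hcnn : 0 ≤ c := intervalIntegral.integral_nonneg hxy (fun s _ => abs_nonneg _)
  -- key estimate with slack η
  have key : ∀ η : ℝ, 0 < η →
      |Θ (f y) - Θ (f x)| ≤ (∫ t in x..y, h (f t) * |g t|) + η * c := by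
    intro η hη
    -- uniform continuity of h ∘ f on Icc x y
    have huc : UniformContinuousOn (fun s => h (f s)) (Icc x y) :=
      isCompact_Icc.uniformContinuousOn_of_continuous (hc.comp_continuousOn hfc)
    rw [Metric.uniformContinuousOn_iff] at huc
    obtain ⟨δ, hδ, hδ'⟩ := huc η hη
    obtain ⟨m, hm⟩ := exists_nat_gt ((y - x) / δ)
    have hm0 : 0 < (m:ℝ) := lt_of_le_of_lt (div_nonneg (by linarith) hδ.le) hm
    set step := (y - x) / m with hstep
    have hstep0 : 0 < step := div_pos (by linarith) hm0
    have hstepδ : step < δ := by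
      rw [hstep, div_lt_iff₀ hm0]
      have := (div_lt_iff₀ hδ).1 hm
      calc y - x < m * δ := by linarith [(div_lt_iff₀ hδ).1 hm]
        _ = δ * m := by ring
    set t : ℕ → ℝ := fun i => x + i * step with ht
    have ht0 : t 0 = x := by simp [ht]
    have htm : t m = y := by
      simp only [ht, hstep]
      field_simp
      ring
    have htmono : Monotone t := by
      intro i j hij
      simp only [ht]
      have : (i:ℝ) ≤ j := Nat.cast_le.2 hij
      nlinarith
    have htmem : ∀ i, i ≤ m → t i ∈ Icc x y := by
      intro i hi
      constructor
      · simp only [ht]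
        nlinarith [mul_nonneg (Nat.cast_nonneg (α := ℝ) i) hstep0.le]
      · rw [← htm]; exact htmono hi
    -- per-piece integrability
    have hpiece : ∀ i, i < m → IntervalIntegrable (fun s => (h (f s) + η) * |g s|)
        volume (t i) (t (i+1)) := by
      intro i hi
      have hsub : Icc (t i) (t (i+1)) ⊆ Icc x y :=
        Icc_subset_Icc (htmem i hi.le).1 (htmem (i+1) hi).2
      refine (intervalIntegrable_iff_integrableOn_Icc_of_le
        (htmono (Nat.le_succ i))).2 ?_
      have : IntegrableOn (fun s => h (f s) * |g s| + η * |g s|) (Icc (t i) (t (i+1))) :=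
        ((hhfgi.mono_set hsub).add ((IntegrableOn.mono_set hgi.abs hsub).const_mul η))
      exact this.congr_fun (fun s _ => by ring) measurableSet_Icc
    -- per-piece bound
    have hpb : ∀ i, i < m → dist (Θ (f (t i))) (Θ (f (t (i+1)))) ≤
        ∫ s in (t i)..(t (i+1)), (h (f s) + η) * |g s| := by
      intro i hi
      set A := t i with hA
      set A' := t (i+1) with hA'
      have hAA' : A ≤ A' := htmono (Nat.le_succ i)
      have hsub : Icc A A' ⊆ Icc x y :=
        Icc_subset_Icc (htmem i hi.le).1 (htmem (i+1) hi).2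
      have hlen : A' - A < δ := by
        have : A' - A = step := by simp only [hA, hA', ht]; push_cast; ring
        rw [this]; exact hstepδ
      -- minimum of h∘f on the piece
      obtain ⟨τ, hτmem, hτmin⟩ := isCompact_Icc.exists_isMinOn (nonempty_Icc.2 hAA')
        ((hc.comp_continuousOn hfc).mono hsub)
      have hτxy := hsub hτmem
      -- value interval
      have hIVT := intermediate_value_uIcc
        (show ContinuousOn f (uIcc A A') by rw [uIcc_of_le hAA']; exact hfc.mono hsub)
      have huIcc : uIcc (f A) (f A') = Icc (f A ⊓ f A') (f A ⊔ f A') := by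
        rcases le_total (f A) (f A') with hle | hle
        · rw [uIcc_of_le hle, inf_eq_left.2 hle, sup_eq_right.2 hle]
        · rw [uIcc_of_ge hle, inf_eq_right.2 hle, sup_eq_left.2 hle]
      have hvb : ∀ s ∈ Icc (f A ⊓ f A') (f A ⊔ f A'), h s ≤ h (f τ) + η := by
        intro s hs
        rw [← huIcc] at hs
        obtain ⟨ξ, hξ, rfl⟩ := hIVT hs
        rw [uIcc_of_le hAA'] at hξ
        have hd : dist ξ τ < δ := by
          rw [Real.dist_eq, abs_sub_lt_iff]
          constructor <;> [skip; skip] <;>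
            · have := hξ.1; have := hξ.2; have := hτmem.1; have := hτmem.2; linarith
        have := hδ' ξ (hsub hξ) τ hτxy hd
        rw [Real.dist_eq] at this
        have := abs_sub_lt_iff.1 this
        linarith [this.1]
      -- |f A' - f A| ≤ ∫ |g|
      have hfd : |f A' - f A| ≤ ∫ s in A..A', |g s| := by
        rw [hftc A (hsub (left_mem_Icc.2 hAA')) A' (hsub (right_mem_Icc.2 hAA'))]
        exact intervalIntegral.abs_integral_le_integral_abs hAA'
      -- main chain
      have h1 : dist (Θ (f A)) (Θ (f A')) = |Θ (f A ⊔ f A') - Θ (f A ⊓ f A')| := by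
        rcases le_total (f A) (f A') with hle | hle
        · rw [sup_eq_right.2 hle, inf_eq_left.2 hle, Real.dist_eq, abs_sub_comm]
        · rw [sup_eq_left.2 hle, inf_eq_right.2 hle, Real.dist_eq]
      have h2 : |Θ (f A ⊔ f A') - Θ (f A ⊓ f A')| ≤
          ∫ s in (f A ⊓ f A')..(f A ⊔ f A'), h s := hΘ _ _ inf_le_sup
      have h3 : (∫ s in (f A ⊓ f A')..(f A ⊔ f A'), h s) ≤
          (h (f τ) + η) * (f A ⊔ f A' - f A ⊓ f A') := by
        have hci : IntervalIntegrable h volume (f A ⊓ f A') (f A ⊔ f A') :=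
          hc.intervalIntegrable _ _
        calc (∫ s in (f A ⊓ f A')..(f A ⊔ f A'), h s)
            ≤ ∫ _s in (f A ⊓ f A')..(f A ⊔ f A'), (h (f τ) + η) := by
              apply intervalIntegral.integral_mono_on inf_le_sup hci
                intervalIntegrable_const hvb
          _ = (h (f τ) + η) * (f A ⊔ f A' - f A ⊓ f A') := by
              rw [intervalIntegral.integral_const, smul_eq_mul]; ring
      have h4 : f A ⊔ f A' - f A ⊓ f A' = |f A' - f A| := by
        rcases le_total (f A) (f A') with hle | hle
        · rw [sup_eq_right.2 hle, inf_eq_left.2 hle, abs_of_nonneg (by linarith)]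
        · rw [sup_eq_left.2 hle, inf_eq_right.2 hle, abs_of_nonpos (by linarith)]; ring
      have h5 : (h (f τ) + η) * |f A' - f A| ≤ (h (f τ) + η) * ∫ s in A..A', |g s| := by
        apply mul_le_mul_of_nonneg_left hfd (by linarith [hnn (f τ)])
      have h6 : (h (f τ) + η) * (∫ s in A..A', |g s|) =
          ∫ s in A..A', (h (f τ) + η) * |g s| := by
        rw [← intervalIntegral.integral_const_mul]
      have h7 : (∫ s in A..A', (h (f τ) + η) * |g s|) ≤
          ∫ s in A..A', (h (f s) + η) * |g s| := by
        apply intervalIntegral.integral_mono_on hAA'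
        · exact (hgiv.mono_set (by rw [uIcc_of_le hAA', uIcc_of_le hxy]; exact hsub)).abs.const_mul _
        · exact hpiece i hi
        · intro s hs
          have : h (f τ) ≤ h (f s) := hτmin hs
          have : h (f τ) + η ≤ h (f s) + η := by linarith
          exact mul_le_mul_of_nonneg_right this (abs_nonneg _)
      calc dist (Θ (f A)) (Θ (f A')) = |Θ (f A ⊔ f A') - Θ (f A ⊓ f A')| := h1
        _ ≤ ∫ s in (f A ⊓ f A')..(f A ⊔ f A'), h s := h2
        _ ≤ (h (f τ) + η) * (f A ⊔ f A' - f A ⊓ f A') := h3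
        _ = (h (f τ) + η) * |f A' - f A| := by rw [h4]
        _ ≤ (h (f τ) + η) * ∫ s in A..A', |g s| := h5
        _ = ∫ s in A..A', (h (f τ) + η) * |g s| := h6
        _ ≤ ∫ s in A..A', (h (f s) + η) * |g s| := h7
    -- telescoping
    have htel : |Θ (f y) - Θ (f x)| ≤
        ∑ i ∈ Finset.range m, dist (Θ (f (t i))) (Θ (f (t (i+1)))) := by
      have := dist_le_range_sum_dist (fun i => Θ (f (t i))) m
      rw [ht0, htm] at this
      rw [abs_sub_comm, ← Real.dist_eq]
      exact this
    have hsum : ∑ i ∈ Finset.range m, (∫ s in (t i)..(t (i+1)), (h (f s) + η) * |g s|) =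
        ∫ s in x..y, (h (f s) + η) * |g s| := by
      rw [intervalIntegral.sum_integral_adjacent_intervals (fun k hk => hpiece k hk), ht0, htm]
    have hsplit : (∫ s in x..y, (h (f s) + η) * |g s|) =
        (∫ s in x..y, h (f s) * |g s|) + η * c := by
      have e1 : ∀ s, (h (f s) + η) * |g s| = h (f s) * |g s| + η * |g s| := fun s => by ring
      rw [intervalIntegral.integral_congr (fun s _ => e1 s)]
      rw [intervalIntegral.integral_add
        ((intervalIntegrable_iff_integrableOn_Icc_of_le hxy).2 hhfgi)
        (hgiv.abs.const_mul η), intervalIntegral.integral_const_mul]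
    calc |Θ (f y) - Θ (f x)| ≤ ∑ i ∈ Finset.range m, dist (Θ (f (t i))) (Θ (f (t (i+1)))) := htel
      _ ≤ ∑ i ∈ Finset.range m, ∫ s in (t i)..(t (i+1)), (h (f s) + η) * |g s| := by
          apply Finset.sum_le_sum
          intro i hi
          exact hpb i (Finset.mem_range.1 hi)
      _ = ∫ s in x..y, (h (f s) + η) * |g s| := hsum
      _ = (∫ s in x..y, h (f s) * |g s|) + η * c := hsplit
  refine le_of_forall_pos_le_add (fun η₀ hη₀ => ?_)
  have hc1 : (0:ℝ) < c + 1 := by linarith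
  have := key (η₀ / (c + 1)) (div_pos hη₀ hc1)
  have h2 : η₀ / (c + 1) * c ≤ η₀ := by
    rw [div_mul_eq_mul_div, div_le_iff₀ hc1]
    nlinarith
  linarith

noncomputable section MM

/-- clamp to `[-1/2,1/2]`, doubled -/
def Tc (s : ℝ) : ℝ := 2 * max (-(1/2)) (min (1/2) s)

/-- density controlling the variation of `Tc ∘ u` -/
def hT (t : ℝ) : ℝ := min 2 ((8/3) * |t^2 - 1|)

lemma Tc_mono : Monotone Tc := by
  intro s t hst
  unfold Tc
  have : min (1/2) s ≤ min (1/2) t := min_le_min le_rfl hst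
  have := max_le_max (le_refl (-(1/2:ℝ))) this
  linarith

lemma Tc_cont : Continuous Tc := by
  unfold Tc; fun_prop

lemma Tc_abs_le (s : ℝ) : |Tc s| ≤ 1 := by
  unfold Tc
  rw [abs_le]
  constructor
  · have : (-(1/2:ℝ)) ≤ max (-(1/2)) (min (1/2) s) := le_max_left _ _
    linarith
  · have h1 : min (1/2) s ≤ 1/2 := min_le_left _ _
    have : max (-(1/2:ℝ)) (min (1/2) s) ≤ 1/2 := max_le (by norm_num) h1
    linarith

lemma hT_cont : Continuous hT := by
  unfold hT; fun_prop

lemma hT_nonneg (s : ℝ) : 0 ≤ hT s := le_min (by norm_num) (by positivity)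

lemma hT_le (s : ℝ) : hT s ≤ 2 := min_le_left _ _

lemma hT_le' (s : ℝ) : hT s ≤ (8/3) * |s^2 - 1| := min_le_right _ _

lemma sub_Tc_le (s : ℝ) : |s - Tc s| ≤ |s^2 - 1| := by
  unfold Tc
  rcases le_total s (-(1/2:ℝ)) with h | h
  · rw [min_eq_right (by linarith), max_eq_left (by linarith)]
    rw [abs_sub_le_iff]
    constructor <;> [skip; skip] <;> nlinarith [le_abs_self (s^2-1), neg_abs_le (s^2-1)]
  rcases le_total (1/2:ℝ) s with h2 | h2
  · rw [min_eq_left h2, max_eq_right (by norm_num)]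
    rw [abs_sub_le_iff]
    constructor <;> [skip; skip] <;> nlinarith [le_abs_self (s^2-1), neg_abs_le (s^2-1)]
  · rw [min_eq_right h2, max_eq_right h]
    rw [abs_sub_le_iff]
    constructor <;> [skip; skip] <;> nlinarith [le_abs_self (s^2-1), neg_abs_le (s^2-1)]

lemma Tc_sq_le (s : ℝ) : ((Tc s)^2 - 1)^2 ≤ (16/9) * (s^2 - 1)^2 := by
  unfold Tc
  rcases le_total s (-(1/2:ℝ)) with h | h
  · rw [min_eq_right (by linarith), max_eq_left (by linarith)]
    nlinarith [sq_nonneg (s^2-1), sq_nonneg s]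
  rcases le_total (1/2:ℝ) s with h2 | h2
  · rw [min_eq_left h2, max_eq_right (by norm_num)]
    nlinarith [sq_nonneg (s^2-1), sq_nonneg s]
  · rw [min_eq_right h2, max_eq_right h]
    have h3 : s^2 ≤ 1/4 := by nlinarith
    nlinarith [sq_nonneg s, mul_nonneg (sq_nonneg s) (by linarith : (0:ℝ) ≤ 1/4 - s^2)]

lemma Tc_integral (α β : ℝ) (hαβ : α ≤ β) : |Tc β - Tc α| ≤ ∫ t in α..β, hT t := by
  set mα := max (-(1/2:ℝ)) (min (1/2) α) with hmα
  set mβ := max (-(1/2:ℝ)) (min (1/2) β) with hmβ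
  have hmono : mα ≤ mβ := by
    apply max_le_max le_rfl (min_le_min le_rfl hαβ)
  have hTc : Tc β - Tc α = 2 * (mβ - mα) := by unfold Tc; rw [← hmα, ← hmβ]; ring
  have hint : IntervalIntegrable hT volume α β := hT_cont.intervalIntegrable _ _
  rcases eq_or_lt_of_le hmono with heq | hlt
  · rw [hTc, ← heq]
    simp only [sub_self, mul_zero, abs_zero]
    exact intervalIntegral.integral_nonneg hαβ (fun t _ => hT_nonneg t)
  · have hbounds : -(1/2:ℝ) ≤ mα ∧ mβ ≤ 1/2 := by
      constructor
      · exact le_max_left _ _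
      · exact max_le (by norm_num) (min_le_left _ _)
    have hαmα : α ≤ mα := by
      by_cases hα : α ≤ 1/2
      · rw [hmα, min_eq_right hα]; exact le_max_right _ _
      · exfalso
        push_neg at hα
        have : mα = 1/2 := by rw [hmα, min_eq_left hα.le]; exact max_eq_right (by norm_num)
        rw [this] at hlt
        linarith [hbounds.2]
    have hmββ : mβ ≤ β := by
      by_cases hβ : -(1/2:ℝ) ≤ β
      · rw [hmβ, max_eq_right (le_min (by norm_num) hβ)]
        exact min_le_right _ _
      · exfalso
        push_neg at hβ
        have : mβ = -(1/2) := by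
          rw [hmβ, min_eq_right (by linarith)]
          exact max_eq_left (by linarith)
        rw [this] at hlt
        linarith [hbounds.1]
    have hval : ∀ t ∈ uIcc mα mβ, hT t = 2 := by
      intro t ht
      rw [uIcc_of_le hmono] at ht
      have h1 : -(1/2:ℝ) ≤ t := le_trans hbounds.1 ht.1
      have h2 : t ≤ 1/2 := le_trans ht.2 hbounds.2
      unfold hT
      apply min_eq_left
      have : |t^2 - 1| = 1 - t^2 := by
        rw [abs_of_nonpos (by nlinarith)]; ring
      rw [this]
      nlinarith
    have hmid : (∫ t in mα..mβ, hT t) = 2 * (mβ - mα) := by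
      rw [intervalIntegral.integral_congr hval, intervalIntegral.integral_const, smul_eq_mul]
      ring
    have hsplit : (∫ t in α..β, hT t) =
        (∫ t in α..mα, hT t) + (∫ t in mα..mβ, hT t) + (∫ t in mβ..β, hT t) := by
      rw [intervalIntegral.integral_add_adjacent_intervals
          (hT_cont.intervalIntegrable _ _) (hT_cont.intervalIntegrable _ _),
        intervalIntegral.integral_add_adjacent_intervals
          (hT_cont.intervalIntegrable _ _) (hT_cont.intervalIntegrable _ _)]
    have hnn1 : 0 ≤ ∫ t in α..mα, hT t :=
      intervalIntegral.integral_nonneg hαmα (fun t _ => hT_nonneg t)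
    have hnn2 : 0 ≤ ∫ t in mβ..β, hT t :=
      intervalIntegral.integral_nonneg hmββ (fun t _ => hT_nonneg t)
    rw [hTc, abs_of_nonneg (by linarith), hsplit, hmid]
    linarith

lemma evar_bound {h Θ : ℝ → ℝ} (hc : Continuous h) (hnn : ∀ s, 0 ≤ h s)
    {B : ℝ} (hB : ∀ s, h s ≤ B)
    (hΘ : ∀ α β : ℝ, α ≤ β → |Θ β - Θ α| ≤ ∫ t in α..β, h t)
    {f g : ℝ → ℝ} {a b : ℝ}
    (hfc : ContinuousOn f (Ioo a b))
    (hgi : IntegrableOn g (Ioo a b))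
    (hftc : ∀ z ∈ Ioo a b, ∀ w ∈ Ioo a b, f w - f z = ∫ t in z..w, g t) :
    eVariationOn (fun s => Θ (f s)) (Ioo a b) ≤
      ENNReal.ofReal (∫ s in Ioo a b, h (f s) * |g s|) := by
  have hfm : AEStronglyMeasurable (fun s => h (f s)) (volume.restrict (Ioo a b)) :=
    ((hc.comp_continuousOn hfc).aestronglyMeasurable measurableSet_Ioo)
  have hBnn : 0 ≤ B := le_trans (hnn 0) (hB 0)
  have hint : IntegrableOn (fun s => h (f s) * |g s|) (Ioo a b) := by
    refine (hgi.abs.const_mul B).mono (hfm.mul hgi.abs.aestronglyMeasurable) ?_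
    refine ae_of_all _ (fun s => ?_)
    simp only [Real.norm_eq_abs, abs_mul, abs_abs]
    have h0 : |h (f s)| ≤ |B| := by
      rw [abs_of_nonneg (hnn _)]; exact le_trans (hB _) (le_abs_self _)
    exact mul_le_mul_of_nonneg_right h0 (abs_nonneg _)
  refine iSup_le fun np => ?_
  obtain ⟨n, seq, hmono, hmem⟩ := np
  dsimp only
  have hIccsub : ∀ i j : ℕ, i ≤ j → Icc (seq i) (seq j) ⊆ Ioo a b := by
    intro i j hij z hz
    exact ⟨lt_of_lt_of_le (hmem i).1 hz.1, lt_of_le_of_lt hz.2 (hmem j).2⟩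
  have hseg : ∀ i : ℕ, |Θ (f (seq (i+1))) - Θ (f (seq i))| ≤
      ∫ s in (seq i)..(seq (i+1)), h (f s) * |g s| := by
    intro i
    have hle : seq i ≤ seq (i+1) := hmono (Nat.le_succ i)
    have hsub := hIccsub i (i+1) (Nat.le_succ i)
    exact theta_segment hc hnn hB hΘ hle (hfc.mono hsub) (hgi.mono_set hsub)
      (fun z hz w hw => hftc z (hsub hz) w (hsub hw))
  have hIcell : ∀ i, IntervalIntegrable (fun s => h (f s) * |g s|) volume (seq i) (seq (i+1)) := by
    intro i
    have hle : seq i ≤ seq (i+1) := hmono (Nat.le_succ i)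
    exact (intervalIntegrable_iff_integrableOn_Icc_of_le hle).2
      (hint.mono_set (hIccsub i (i+1) (Nat.le_succ i)))
  have hInn : ∀ i : ℕ, 0 ≤ ∫ s in (seq i)..(seq (i+1)), h (f s) * |g s| := by
    intro i
    exact intervalIntegral.integral_nonneg (hmono (Nat.le_succ i))
      (fun s _ => mul_nonneg (hnn _) (abs_nonneg _))
  calc ∑ i ∈ Finset.range n, edist (Θ (f (seq (i+1)))) (Θ (f (seq i)))
      = ∑ i ∈ Finset.range n,
          ENNReal.ofReal |Θ (f (seq (i+1))) - Θ (f (seq i))| := by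
        apply Finset.sum_congr rfl
        intro i _
        rw [edist_dist, Real.dist_eq]
    _ ≤ ∑ i ∈ Finset.range n,
          ENNReal.ofReal (∫ s in (seq i)..(seq (i+1)), h (f s) * |g s|) := by
        apply Finset.sum_le_sum
        intro i _
        exact ENNReal.ofReal_le_ofReal (hseg i)
    _ = ENNReal.ofReal (∑ i ∈ Finset.range n,
          ∫ s in (seq i)..(seq (i+1)), h (f s) * |g s|) := by
        rw [ENNReal.ofReal_sum_of_nonneg (fun i _ => hInn i)]
    _ = ENNReal.ofReal (∫ s in (seq 0)..(seq n), h (f s) * |g s|) := by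
        rw [intervalIntegral.sum_integral_adjacent_intervals (fun k _ => hIcell k)]
    _ ≤ ENNReal.ofReal (∫ s in Ioo a b, h (f s) * |g s|) := by
        apply ENNReal.ofReal_le_ofReal
        rw [intervalIntegral.integral_of_le (hmono (Nat.zero_le n))]
        apply setIntegral_mono_set hint
        · exact ae_of_all _ (fun s => mul_nonneg (hnn _) (abs_nonneg _))
        · refine HasSubset.Subset.eventuallyLE (fun z hz => ?_)
          exact ⟨lt_of_lt_of_le (hmem 0).1 hz.1.le, lt_of_le_of_lt hz.2 (hmem n).2⟩

lemma helly_mono {a b M : ℝ} (hM : 0 ≤ M) (F : ℕ → ℝ → ℝ)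
    (hmono : ∀ n, MonotoneOn (F n) (Ioo a b))
    (hbd : ∀ n, ∀ x ∈ Ioo a b, F n x ∈ Icc (-M) M) :
    ∃ φ : ℕ → ℕ, StrictMono φ ∧ ∃ G : ℝ → ℝ, Monotone G ∧ (∀ x, G x ∈ Icc (-M) M) ∧
      {x | x ∈ Ioo a b ∧ ¬ Tendsto (fun k => F (φ k) x) atTop (𝓝 (G x))}.Countable := by
  classical
  set Fq : ℕ → ℚ → ℝ := fun n q => if (q:ℝ) ∈ Ioo a b then F n (q:ℝ) else 0 with hFq
  have hFqmem : ∀ n, Fq n ∈ Set.univ.pi (fun _ : ℚ => Icc (-M) M) := by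
    intro n q _
    simp only [hFq]
    split_ifs with hq
    · exact hbd n _ hq
    · exact ⟨by linarith, hM⟩
  have hS : IsCompact (Set.univ.pi (fun _ : ℚ => Icc (-M) M)) :=
    isCompact_univ_pi (fun _ => isCompact_Icc)
  obtain ⟨g, hgS, φ, hφ, hconv⟩ := hS.isSeqCompact hFqmem
  have hq : ∀ q : ℚ, Tendsto (fun k => Fq (φ k) q) atTop (𝓝 (g q)) := by
    intro q
    exact (tendsto_pi_nhds.1 hconv) q
  have hgI : ∀ q, g q ∈ Icc (-M) M := fun q => hgS q (mem_univ q)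
  refine ⟨φ, hφ, ?_⟩
  set G : ℝ → ℝ := fun x => sInf (insert M ((fun q : ℚ => g q) '' {q : ℚ | x < (q:ℝ) ∧ (q:ℝ) < b}))
    with hG
  have hbdd : ∀ x : ℝ, ∀ r ∈ insert M ((fun q : ℚ => g q) '' {q : ℚ | x < (q:ℝ) ∧ (q:ℝ) < b}),
      -M ≤ r ∧ r ≤ M := by
    intro x r hr
    rcases hr with rfl | ⟨q, _, rfl⟩
    · exact ⟨by linarith, le_rfl⟩
    · exact ⟨(hgI q).1, (hgI q).2⟩
  have hbddBelow : ∀ x : ℝ, BddBelow (insert M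
      ((fun q : ℚ => g q) '' {q : ℚ | x < (q:ℝ) ∧ (q:ℝ) < b})) := by
    intro x
    exact ⟨-M, fun r hr => (hbdd x r hr).1⟩
  have hGmono : Monotone G := by
    intro x y hxy
    apply csInf_le_csInf (hbddBelow x) ⟨M, mem_insert _ _⟩
    intro r hr
    rcases hr with rfl | ⟨q, hq', rfl⟩
    · exact mem_insert _ _
    · exact mem_insert_of_mem _ ⟨q, ⟨lt_of_le_of_lt hxy hq'.1, hq'.2⟩, rfl⟩
  have hGbd : ∀ x, G x ∈ Icc (-M) M := by
    intro x
    constructor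
    · exact le_csInf ⟨M, mem_insert _ _⟩ (fun r hr => (hbdd x r hr).1)
    · exact csInf_le (hbddBelow x) (mem_insert _ _)
  -- boundedness of the sequences
  have hBddLe : ∀ x ∈ Ioo a b, IsBoundedUnder (· ≤ ·) atTop (fun k => F (φ k) x) :=
    fun x hx => isBoundedUnder_of ⟨M, fun k => (hbd (φ k) x hx).2⟩
  have hBddGe : ∀ x ∈ Ioo a b, IsBoundedUnder (· ≥ ·) atTop (fun k => F (φ k) x) :=
    fun x hx => isBoundedUnder_of ⟨-M, fun k => (hbd (φ k) x hx).1⟩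
  -- upper bound on limsup
  have claimA : ∀ x ∈ Ioo a b, ∀ q : ℚ, x < (q:ℝ) → (q:ℝ) < b →
      limsup (fun k => F (φ k) x) atTop ≤ g q := by
    intro x hx q hq1 hq2
    have hqI : (q:ℝ) ∈ Ioo a b := ⟨lt_trans hx.1 hq1, hq2⟩
    have hle : ∀ k, F (φ k) x ≤ Fq (φ k) q := by
      intro k
      simp only [hFq, if_pos hqI]
      exact hmono (φ k) hx hqI hq1.le
    calc limsup (fun k => F (φ k) x) atTop ≤ limsup (fun k => Fq (φ k) q) atTop := by
          apply limsup_le_limsup (Eventually.of_forall hle)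
            ((hBddGe x hx).isCoboundedUnder_le) ((hq q).isBoundedUnder_le)
      _ = g q := (hq q).limsup_eq
  have claimB : ∀ x ∈ Ioo a b, ∀ q : ℚ, a < (q:ℝ) → (q:ℝ) < x →
      g q ≤ liminf (fun k => F (φ k) x) atTop := by
    intro x hx q hq1 hq2
    have hqI : (q:ℝ) ∈ Ioo a b := ⟨hq1, lt_trans hq2 hx.2⟩
    have hle : ∀ k, Fq (φ k) q ≤ F (φ k) x := by
      intro k
      simp only [hFq, if_pos hqI]
      exact hmono (φ k) hqI hx hq2.le
    calc g q = liminf (fun k => Fq (φ k) q) atTop := ((hq q).liminf_eq).symm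
      _ ≤ liminf (fun k => F (φ k) x) atTop := by
          apply liminf_le_liminf (Eventually.of_forall hle)
            ((hq q).isBoundedUnder_ge) ((hBddLe x hx).isCoboundedUnder_ge)
  have claimC : ∀ x ∈ Ioo a b, limsup (fun k => F (φ k) x) atTop ≤ G x := by
    intro x hx
    apply le_csInf ⟨M, mem_insert _ _⟩
    intro r hr
    rcases hr with rfl | ⟨q, hq', rfl⟩
    · apply limsup_le_of_le ((hBddGe x hx).isCoboundedUnder_le)
      exact Eventually.of_forall (fun k => (hbd _ x hx).2)
    · exact claimA x hx q hq'.1 hq'.2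
  have claimD : ∀ x ∈ Ioo a b, ContinuousAt G x →
      G x ≤ liminf (fun k => F (φ k) x) atTop := by
    intro x hx hcont
    refine le_of_forall_pos_le_add (fun η hη => ?_)
    have : ∀ᶠ y in 𝓝 x, |G y - G x| < η := by
      have := Metric.tendsto_nhds.1 hcont.tendsto η hη
      simpa [Real.dist_eq] using this
    obtain ⟨δ, hδ, hball⟩ := Metric.eventually_nhds_iff.1 this
    set x' := max (x - δ/2) ((a + x)/2) with hx'
    have hx'1 : x' < x := by
      rw [hx']
      apply max_lt (by linarith) (by linarith [hx.1])
    have hx'a : a < x' := lt_of_lt_of_le (by linarith [hx.1]) (le_max_right _ _)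
    have hx'close : |x' - x| < δ := by
      rw [abs_lt]
      constructor
      · have : x - δ/2 ≤ x' := le_max_left _ _
        linarith
      · linarith
    have hGx' : G x - η < G x' := by
      have := hball hx'close
      rw [abs_lt] at this
      linarith [this.1]
    obtain ⟨q, hq1, hq2⟩ := exists_rat_btwn hx'1
    have hgq : G x' ≤ g q := by
      apply csInf_le (hbddBelow x')
      exact mem_insert_of_mem _ ⟨q, ⟨hq1, lt_trans hq2 hx.2⟩, rfl⟩
    have := claimB x hx q (lt_trans hx'a hq1) hq2
    linarith
  refine ⟨G, hGmono, hGbd, ?_⟩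
  apply (hGmono.countable_not_continuousAt).mono
  intro x hx
  simp only [mem_setOf_eq] at hx ⊢
  intro hcont
  apply hx.2
  exact tendsto_of_le_liminf_of_limsup_le (claimD x hx.1 hcont) (claimC x hx.1)
    (hBddLe x hx.1) (hBddGe x hx.1)

lemma eVariationOn_sub_le (f g : ℝ → ℝ) (s : Set ℝ) :
    eVariationOn (fun x => f x - g x) s ≤ eVariationOn f s + eVariationOn g s := by
  refine iSup_le fun np => ?_
  obtain ⟨n, seq, hmono, hmem⟩ := np
  dsimp only
  calc ∑ i ∈ Finset.range n,
        edist (f (seq (i+1)) - g (seq (i+1))) (f (seq i) - g (seq i))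
      ≤ ∑ i ∈ Finset.range n,
          (edist (f (seq (i+1))) (f (seq i)) + edist (g (seq (i+1))) (g (seq i))) := by
        apply Finset.sum_le_sum
        intro i _
        rw [sub_eq_add_neg, sub_eq_add_neg]
        exact le_trans (edist_add_add_le _ _ _ _) (by rw [edist_neg_neg])
    _ = (∑ i ∈ Finset.range n, edist (f (seq (i+1))) (f (seq i))) +
        ∑ i ∈ Finset.range n, edist (g (seq (i+1))) (g (seq i)) := by
        rw [Finset.sum_add_distrib]
    _ ≤ eVariationOn f s + eVariationOn g s :=
        add_le_add (eVariationOn.sum_le (f := f) (n := n) hmono hmem) (eVariationOn.sum_le (f := g) (n := n) hmono hmem)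

lemma cont_of_ftc {f g : ℝ → ℝ} {a b : ℝ} (hgi : IntegrableOn g (Ioo a b))
    (hftc : ∀ z ∈ Ioo a b, ∀ w ∈ Ioo a b, f w - f z = ∫ t in z..w, g t) :
    ContinuousOn f (Ioo a b) := by
  intro z hz
  set l := (a + z)/2 with hl
  set r := (z + b)/2 with hr
  have hal : a < l := by rw [hl]; linarith [hz.1]
  have hlz : l < z := by rw [hl]; linarith [hz.1]
  have hzr : z < r := by rw [hr]; linarith [hz.2]
  have hrb : r < b := by rw [hr]; linarith [hz.2]
  have hIcc : Icc l r ⊆ Ioo a b := fun t ht => ⟨lt_of_lt_of_le hal ht.1, lt_of_le_of_lt ht.2 hrb⟩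
  have hlr : l ≤ r := by linarith
  have huIcc : uIcc l r = Icc l r := uIcc_of_le hlr
  have hprim : ContinuousOn (fun w => ∫ t in l..w, g t) (Icc l r) := by
    rw [← huIcc]
    exact intervalIntegral.continuousOn_primitive_interval (by rw [huIcc]; exact hgi.mono_set hIcc)
  have hfeq : ∀ w ∈ Icc l r, f w = f l + ∫ t in l..w, g t := by
    intro w hw
    have := hftc l (hIcc (left_mem_Icc.2 hlr)) w (hIcc hw)
    linarith
  have hcont : ContinuousOn f (Icc l r) :=
    (continuousOn_const.add hprim).congr hfeq
  have : ContinuousAt f z := hcont.continuousAt (Icc_mem_nhds hlz hzr)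
  exact this.continuousWithinAt

lemma integral_nonneg_mono {h : ℝ → ℝ} (hc : Continuous h) (hnn : ∀ t, 0 ≤ h t)
    {α β c d : ℝ} (h1 : α ≤ c) (h2 : c ≤ d) (h3 : d ≤ β) :
    (∫ t in c..d, h t) ≤ ∫ t in α..β, h t := by
  have hsplit : (∫ t in α..β, h t) =
      (∫ t in α..c, h t) + (∫ t in c..d, h t) + (∫ t in d..β, h t) := by
    rw [intervalIntegral.integral_add_adjacent_intervals
        (hc.intervalIntegrable _ _) (hc.intervalIntegrable _ _),
      intervalIntegral.integral_add_adjacent_intervals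
        (hc.intervalIntegrable _ _) (hc.intervalIntegrable _ _)]
  have hnn1 : 0 ≤ ∫ t in α..c, h t := intervalIntegral.integral_nonneg h1 (fun t _ => hnn t)
  have hnn2 : 0 ≤ ∫ t in d..β, h t := intervalIntegral.integral_nonneg h3 (fun t _ => hnn t)
  linarith

/-- the capped double-well density for the sup bound -/
def h3f (t : ℝ) : ℝ := min 3 |t^2 - 1|

/-- its primitive -/
def Pc (s : ℝ) : ℝ := ∫ t in (0:ℝ)..s, h3f t

lemma h3f_cont : Continuous h3f := by unfold h3f; fun_prop

lemma h3f_nonneg (t : ℝ) : 0 ≤ h3f t := le_min (by norm_num) (abs_nonneg _)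

lemma h3f_le (t : ℝ) : h3f t ≤ 3 := min_le_left _ _

lemma h3f_le' (t : ℝ) : h3f t ≤ |t^2 - 1| := min_le_right _ _

lemma Pc_integral (α β : ℝ) (hαβ : α ≤ β) : |Pc β - Pc α| ≤ ∫ t in α..β, h3f t := by
  have heq : Pc β - Pc α = ∫ t in α..β, h3f t := by
    unfold Pc
    rw [intervalIntegral.integral_interval_sub_left
      (h3f_cont.intervalIntegrable _ _) (h3f_cont.intervalIntegrable _ _)]
  rw [heq, abs_of_nonneg (intervalIntegral.integral_nonneg hαβ (fun t _ => h3f_nonneg t))]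

lemma hfg_integrable {h f g : ℝ → ℝ} {a b B : ℝ} (hc : Continuous h)
    (hnn : ∀ s, 0 ≤ h s) (hB : ∀ s, h s ≤ B)
    (hfc : ContinuousOn f (Ioo a b)) (hgi : IntegrableOn g (Ioo a b)) :
    IntegrableOn (fun s => h (f s) * |g s|) (Ioo a b) := by
  have hfm : AEStronglyMeasurable (fun s => h (f s)) (volume.restrict (Ioo a b)) :=
    ((hc.comp_continuousOn hfc).aestronglyMeasurable measurableSet_Ioo)
  refine (hgi.abs.const_mul B).mono (hfm.mul hgi.abs.aestronglyMeasurable) ?_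
  refine ae_of_all _ (fun s => ?_)
  simp only [Real.norm_eq_abs, abs_mul, abs_abs]
  have h0 : |h (f s)| ≤ |B| := by
    rw [abs_of_nonneg (hnn _)]; exact le_trans (hB _) (le_abs_self _)
  exact mul_le_mul_of_nonneg_right h0 (abs_nonneg _)

lemma sup_bound {a b C' εn : ℝ} (hab : a < b) (hC1 : 1 ≤ C') (hεpos : 0 < εn)
    (hεsmall : εn * C' < b - a)
    {f g : ℝ → ℝ}
    (hfc : ContinuousOn f (Ioo a b)) (hgi : IntegrableOn g (Ioo a b))
    (hftc : ∀ z ∈ Ioo a b, ∀ w ∈ Ioo a b, f w - f z = ∫ t in z..w, g t)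
    (hE2 : (∫⁻ x in Ioo a b, ENNReal.ofReal ((f x^2 - 1)^2)) ≤
      ENNReal.ofReal εn * ENNReal.ofReal C')
    (hJ : (∫ s in Ioo a b, h3f (f s) * |g s|) ≤ C' / 2) :
    ∀ x ∈ Ioo a b, |f x| ≤ 3 + C' := by
  have hint : IntegrableOn (fun s => h3f (f s) * |g s|) (Ioo a b) :=
    hfg_integrable h3f_cont h3f_nonneg h3f_le hfc hgi
  -- there is a point with |f| ≤ 2
  have hx1 : ∃ x₁ ∈ Ioo a b, |f x₁| ≤ 2 := by
    by_contra hcon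
    push_neg at hcon
    have hpt : ∀ x ∈ Ioo a b, ENNReal.ofReal 9 ≤ ENNReal.ofReal ((f x^2 - 1)^2) := by
      intro x hx
      apply ENNReal.ofReal_le_ofReal
      have h2 := hcon x hx
      have hA : 4 < f x^2 := by nlinarith [sq_abs (f x), h2]
      nlinarith [hA]
    have hlb : ENNReal.ofReal 9 * volume (Ioo a b) ≤
        ∫⁻ x in Ioo a b, ENNReal.ofReal ((f x^2 - 1)^2) := by
      rw [← setLIntegral_const]
      apply lintegral_mono_ae
      exact (ae_restrict_iff' measurableSet_Ioo).2 (ae_of_all _ hpt)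
    rw [Real.volume_Ioo] at hlb
    have := le_trans hlb hE2
    rw [← ENNReal.ofReal_mul (by norm_num), ← ENNReal.ofReal_mul (by linarith)] at this
    rw [ENNReal.ofReal_le_ofReal_iff (by nlinarith)] at this
    nlinarith
  obtain ⟨x₁, hx₁I, hx₁⟩ := hx1
  intro x₀ hx₀
  by_contra habs
  push_neg at habs
  set M₀ := 3 + C' with hM₀
  set xlo := min x₀ x₁ with hxlo
  set xhi := max x₀ x₁ with hxhi
  have hloI : xlo ∈ Ioo a b := by
    rcases min_cases x₀ x₁ with ⟨h, _⟩ | ⟨h, _⟩ <;> rw [hxlo, h] <;> assumption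
  have hhiI : xhi ∈ Ioo a b := by
    rcases max_cases x₀ x₁ with ⟨h, _⟩ | ⟨h, _⟩ <;> rw [hxhi, h] <;> assumption
  have hlohi : xlo ≤ xhi := min_le_max
  have hIccsub : Icc xlo xhi ⊆ Ioo a b :=
    fun t ht => ⟨lt_of_lt_of_le hloI.1 ht.1, lt_of_le_of_lt ht.2 hhiI.2⟩
  have hseg : |Pc (f xhi) - Pc (f xlo)| ≤ ∫ s in xlo..xhi, h3f (f s) * |g s| :=
    theta_segment h3f_cont h3f_nonneg h3f_le Pc_integral hlohi
      (hfc.mono hIccsub) (hgi.mono_set hIccsub)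
      (fun z hz w hw => hftc z (hIccsub hz) w (hIccsub hw))
  have hseg2 : (∫ s in xlo..xhi, h3f (f s) * |g s|) ≤ ∫ s in Ioo a b, h3f (f s) * |g s| := by
    rw [intervalIntegral.integral_of_le hlohi]
    apply setIntegral_mono_set hint
    · exact ae_of_all _ (fun s => mul_nonneg (h3f_nonneg _) (abs_nonneg _))
    · refine HasSubset.Subset.eventuallyLE (fun t ht => ?_)
      exact ⟨lt_of_lt_of_le hloI.1 ht.1.le, lt_of_le_of_lt ht.2 hhiI.2⟩
  have habs01 : |Pc (f x₀) - Pc (f x₁)| ≤ C' / 2 := by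
    rcases le_total x₀ x₁ with hle | hle
    · have : xlo = x₀ ∧ xhi = x₁ := ⟨min_eq_left hle, max_eq_right hle⟩
      rw [abs_sub_comm, ← this.1, ← this.2]
      linarith [hseg, hseg2, hJ]
    · have : xlo = x₁ ∧ xhi = x₀ := ⟨min_eq_right hle, max_eq_left hle⟩
      rw [← this.1, ← this.2]
      linarith [hseg, hseg2, hJ]
  -- the lower bound
  have hPc33 : ∀ α β : ℝ, α ≤ β → Pc β - Pc α = ∫ t in α..β, h3f t := by
    intro α β _
    unfold Pc
    rw [intervalIntegral.integral_interval_sub_left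
      (h3f_cont.intervalIntegrable _ _) (h3f_cont.intervalIntegrable _ _)]
  have hconst : ∀ c d : ℝ, 2 ≤ c → c ≤ d → (∫ t in c..d, h3f t) = 3 * (d - c) := by
    intro c d hc hcd
    have : ∀ t ∈ uIcc c d, h3f t = 3 := by
      intro t ht
      rw [uIcc_of_le hcd] at ht
      have h2t : 2 ≤ t := le_trans hc ht.1
      unfold h3f
      apply min_eq_left
      rw [abs_of_nonneg (by nlinarith)]
      nlinarith
    rw [intervalIntegral.integral_congr this, intervalIntegral.integral_const, smul_eq_mul]
    ring
  have hconst' : ∀ c d : ℝ, d ≤ -2 → c ≤ d → (∫ t in c..d, h3f t) = 3 * (d - c) := by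
    intro c d hd hcd
    have : ∀ t ∈ uIcc c d, h3f t = 3 := by
      intro t ht
      rw [uIcc_of_le hcd] at ht
      have h2t : t ≤ -2 := le_trans ht.2 hd
      unfold h3f
      apply min_eq_left
      rw [abs_of_nonneg (by nlinarith)]
      nlinarith
    rw [intervalIntegral.integral_congr this, intervalIntegral.integral_const, smul_eq_mul]
    ring
  have hM₀2 : (2:ℝ) ≤ M₀ := by rw [hM₀]; linarith
  rcases lt_abs.1 habs with hpos | hneg
  · -- f x₀ > M₀
    have hfx₁2 : f x₁ ≤ 2 := le_trans (le_abs_self _) hx₁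
    have hlow : 3 * (M₀ - 2) ≤ Pc (f x₀) - Pc (f x₁) := by
      rw [hPc33 (f x₁) (f x₀) (by linarith)]
      calc 3 * (M₀ - 2) = ∫ t in (2:ℝ)..M₀, h3f t := by rw [hconst 2 M₀ le_rfl hM₀2]; try ring_nf
        _ ≤ ∫ t in (f x₁)..(f x₀), h3f t :=
            integral_nonneg_mono h3f_cont h3f_nonneg hfx₁2 hM₀2 (by linarith)
    have := le_abs_self (Pc (f x₀) - Pc (f x₁))
    rw [hM₀] at hlow
    linarith
  · -- f x₀ < -M₀
    have hfx₁2 : -2 ≤ f x₁ := neg_le_of_abs_le hx₁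
    have hlow : 3 * (M₀ - 2) ≤ Pc (f x₁) - Pc (f x₀) := by
      rw [hPc33 (f x₀) (f x₁) (by linarith)]
      calc 3 * (M₀ - 2) = ∫ t in (-M₀)..(-2:ℝ), h3f t := by
            rw [hconst' (-M₀) (-2) le_rfl (by linarith)]; try ring_nf
        _ ≤ ∫ t in (f x₀)..(f x₁), h3f t :=
            integral_nonneg_mono h3f_cont h3f_nonneg (by linarith) (by linarith) hfx₁2
    have := neg_abs_le (Pc (f x₀) - Pc (f x₁))
    rw [hM₀] at hlow
    linarith [abs_sub_comm (Pc (f x₀)) (Pc (f x₁)) ▸ habs01]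

lemma amgm_bound {εn : ℝ} (hε : 0 < εn) (s r : ℝ) :
    |s^2 - 1| * |r| ≤ (εn⁻¹ * (s^2-1)^2 + εn * r^2) / 2 := by
  have ha : |s^2-1|^2 = (s^2-1)^2 := sq_abs _
  have hb : |r|^2 = r^2 := sq_abs _
  have hinv : εn * εn⁻¹ = 1 := mul_inv_cancel₀ hε.ne'
  have h1 : 0 ≤ (|s^2-1| - εn * |r|)^2 := sq_nonneg _
  have h3 : εn * (εn⁻¹ * (s^2-1)^2 + εn * r^2 - 2 * (|s^2-1| * |r|)) =
      (|s^2-1| - εn * |r|)^2 := by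
    linear_combination (s^2-1)^2 * hinv - ha - εn^2 * hb
  have h4 : 0 ≤ εn⁻¹ * (s^2-1)^2 + εn * r^2 - 2 * (|s^2-1| * |r|) := by
    nlinarith [h1, h3, hε]
  linarith

lemma integral_h_le {a b C' εn c B : ℝ} (hC'0 : 0 ≤ C') (hε : 0 < εn) (hc : 0 ≤ c)
    {h f g : ℝ → ℝ} (hcont : Continuous h) (hnn : ∀ s, 0 ≤ h s) (hB : ∀ s, h s ≤ B)
    (hle : ∀ s, h s ≤ c * |s^2 - 1|)
    (hfc : ContinuousOn f (Ioo a b)) (hgi : IntegrableOn g (Ioo a b))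
    (hE : (∫⁻ x in Ioo a b, ENNReal.ofReal (εn⁻¹ * (f x^2 - 1)^2 + εn * (g x)^2)) ≤
      ENNReal.ofReal C') :
    (∫ s in Ioo a b, h (f s) * |g s|) ≤ c / 2 * C' := by
  have hint := hfg_integrable hcont hnn hB hfc hgi
  have h1 : ENNReal.ofReal (∫ s in Ioo a b, h (f s) * |g s|) =
      ∫⁻ s in Ioo a b, ENNReal.ofReal (h (f s) * |g s|) :=
    ofReal_integral_eq_lintegral_ofReal hint
      (ae_of_all _ fun s => mul_nonneg (hnn _) (abs_nonneg _))
  have h2 : ∀ s r : ℝ, ENNReal.ofReal (h s * |r|) ≤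
      ENNReal.ofReal (c/2) * ENNReal.ofReal (εn⁻¹ * (s^2-1)^2 + εn * r^2) := by
    intro s r
    rw [← ENNReal.ofReal_mul (by linarith)]
    apply ENNReal.ofReal_le_ofReal
    have hamgm := amgm_bound hε s r
    have h3 : h s * |r| ≤ c * (|s^2-1| * |r|) := by
      rw [← mul_assoc]
      exact mul_le_mul_of_nonneg_right (hle s) (abs_nonneg _)
    calc h s * |r| ≤ c * (|s^2-1| * |r|) := h3
      _ ≤ c * ((εn⁻¹*(s^2-1)^2 + εn*r^2)/2) := mul_le_mul_of_nonneg_left hamgm hc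
      _ = c/2 * (εn⁻¹*(s^2-1)^2 + εn*r^2) := by ring
  have h4 : (∫⁻ s in Ioo a b, ENNReal.ofReal (h (f s) * |g s|)) ≤
      ENNReal.ofReal (c/2) * ENNReal.ofReal C' := by
    calc (∫⁻ s in Ioo a b, ENNReal.ofReal (h (f s) * |g s|))
        ≤ ∫⁻ s in Ioo a b, ENNReal.ofReal (c/2) *
            ENNReal.ofReal (εn⁻¹ * (f s^2-1)^2 + εn * (g s)^2) :=
          lintegral_mono (fun s => h2 (f s) (g s))
      _ = ENNReal.ofReal (c/2) * ∫⁻ s in Ioo a b,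
            ENNReal.ofReal (εn⁻¹ * (f s^2-1)^2 + εn * (g s)^2) :=
          lintegral_const_mul' _ _ ENNReal.ofReal_ne_top
      _ ≤ ENNReal.ofReal (c/2) * ENNReal.ofReal C' := mul_le_mul_right hE _
  have h5 : ENNReal.ofReal (∫ s in Ioo a b, h (f s) * |g s|) ≤
      ENNReal.ofReal (c/2 * C') := by
    rw [h1, ENNReal.ofReal_mul (by linarith)]
    exact h4
  exact (ENNReal.ofReal_le_ofReal_iff (by positivity)).1 h5

lemma evar_Tc {a b C' εn : ℝ} (hC'0 : 0 ≤ C') (hε : 0 < εn)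
    {f g : ℝ → ℝ} (hfc : ContinuousOn f (Ioo a b)) (hgi : IntegrableOn g (Ioo a b))
    (hftc : ∀ z ∈ Ioo a b, ∀ w ∈ Ioo a b, f w - f z = ∫ t in z..w, g t)
    (hE : (∫⁻ x in Ioo a b, ENNReal.ofReal (εn⁻¹ * (f x^2 - 1)^2 + εn * (g x)^2)) ≤
      ENNReal.ofReal C') :
    eVariationOn (fun x => Tc (f x)) (Ioo a b) ≤ ENNReal.ofReal (4/3 * C') := by
  refine le_trans (evar_bound hT_cont hT_nonneg hT_le Tc_integral hfc hgi hftc) ?_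
  apply ENNReal.ofReal_le_ofReal
  have := integral_h_le hC'0 hε (by norm_num : (0:ℝ) ≤ 8/3)
    hT_cont hT_nonneg hT_le hT_le' hfc hgi hE
  linarith

lemma eLpNorm_ofReal_eq {p : ℝ} (hp : 0 < p) {μ : Measure ℝ} (f : ℝ → ℝ) :
    eLpNorm f (ENNReal.ofReal p) μ =
      (∫⁻ x, ENNReal.ofReal (|f x| ^ p) ∂μ) ^ (1/p) := by
  rw [eLpNorm_eq_lintegral_rpow_enorm_toReal
    (by simp [ENNReal.ofReal_eq_zero]; linarith) ENNReal.ofReal_ne_top]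
  rw [ENNReal.toReal_ofReal hp.le]
  congr 1
  apply lintegral_congr
  intro x
  have hco : ‖f x‖ₑ = ENNReal.ofReal |f x| := by
    rw [← ofReal_norm_eq_enorm, Real.norm_eq_abs]
  rw [hco, ENNReal.ofReal_rpow_of_nonneg (abs_nonneg _) hp.le]

lemma tendsto_eLpNorm_zero {p : ℝ} (hp : 0 < p) {μ : Measure ℝ} {f : ℕ → ℝ → ℝ}
    (h : Tendsto (fun k => ∫⁻ x, ENNReal.ofReal (|f k x| ^ p) ∂μ) atTop (𝓝 0)) :
    Tendsto (fun k => eLpNorm (f k) (ENNReal.ofReal p) μ) atTop (𝓝 0) := by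
  rw [ENNReal.tendsto_nhds_zero] at h ⊢
  intro η hη
  have hηp : (0:ℝ≥0∞) < η ^ p := by
    rw [pos_iff_ne_zero]
    intro hcon
    rw [ENNReal.rpow_eq_zero_iff] at hcon
    rcases hcon with ⟨h1, _⟩ | ⟨_, h2⟩
    · exact hη.ne' h1
    · linarith
  filter_upwards [h (η ^ p) hηp] with k hk
  rw [eLpNorm_ofReal_eq hp]
  calc (∫⁻ x, ENNReal.ofReal (|f k x| ^ p) ∂μ) ^ (1/p)
      ≤ (η ^ p) ^ (1/p) := ENNReal.rpow_le_rpow hk (by positivity)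
    _ = η := by
        rw [← ENNReal.rpow_mul, mul_one_div, div_self hp.ne', ENNReal.rpow_one]

end MM

set_option maxHeartbeats 2000000 in
/-- Compactness for the first-order problem, part (i).
If `Ω = (a,b)`, `1 ≤ p < ∞`, `εₙ → 0⁺`, `uₙ ∈ W^{1,p}(Ω)` and
`C := sup_n ∫_Ω εₙ⁻¹(uₙ²-1)² + εₙ|uₙ'|² dx < ∞`, then some subsequence of `uₙ`
converges in `L^p(Ω)` to a function in `BPV(Ω; {-1,1})`. -/
theorem statement_1 (a b p : ℝ) (hab : a < b) (hp1 : 1 ≤ p)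
    (ε : ℕ → ℝ) (hεpos : ∀ n, 0 < ε n) (hε0 : Tendsto ε atTop (𝓝 0))
    (u u' : ℕ → ℝ → ℝ)
    (hW : ∀ n, IsW1On (Set.Ioo a b) (ENNReal.ofReal p) (u n) (u' n))
    (C : ℝ)
    (hC : ∀ n, (∫⁻ x in Set.Ioo a b,
        ENNReal.ofReal ((ε n)⁻¹ * ((u n x) ^ 2 - 1) ^ 2 + ε n * (u' n x) ^ 2))
        ≤ ENNReal.ofReal C) :
    ∃ φ : ℕ → ℕ, StrictMono φ ∧ ∃ w : ℝ → ℝ,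
      (∀ x ∈ Set.Ioo a b, w x = -1 ∨ w x = 1) ∧
      BoundedVariationOn w (Set.Ioo a b) ∧
      TendstoLp (Set.Ioo a b) p (fun k => u (φ k)) w := by
  classical
  have hp0 : 0 < p := lt_of_lt_of_le one_pos hp1
  have hmid : (a+b)/2 ∈ Set.Ioo a b := ⟨by linarith, by linarith⟩
  haveI hfin : IsFiniteMeasure (volume.restrict (Set.Ioo a b)) := by
    constructor
    rw [Measure.restrict_apply_univ, Real.volume_Ioo]
    exact ENNReal.ofReal_lt_top
  set C' := max C 1 with hC'def
  have hC'1 : 1 ≤ C' := le_max_right _ _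
  have hC'0 : 0 < C' := by linarith
  have hE : ∀ n, (∫⁻ x in Set.Ioo a b,
      ENNReal.ofReal ((ε n)⁻¹ * ((u n x)^2 - 1)^2 + ε n * (u' n x)^2)) ≤
      ENNReal.ofReal C' :=
    fun n => le_trans (hC n) (ENNReal.ofReal_le_ofReal (le_max_left _ _))
  have huIcc : ∀ z ∈ Set.Ioo a b, ∀ w ∈ Set.Ioo a b, Set.uIcc z w ⊆ Set.Ioo a b := by
    intro z hz w hw
    rw [uIcc_eq_union]
    rintro t (ht | ht)
    · exact ⟨lt_of_lt_of_le hz.1 ht.1, lt_of_le_of_lt ht.2 hw.2⟩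
    · exact ⟨lt_of_lt_of_le hw.1 ht.1, lt_of_le_of_lt ht.2 hz.2⟩
  have hftc : ∀ n, ∀ z ∈ Set.Ioo a b, ∀ w ∈ Set.Ioo a b,
      u n w - u n z = ∫ t in z..w, u' n t :=
    fun n z hz w hw => (hW n).1 z hz w hw (huIcc z hz w hw)
  have hu'i : ∀ n, IntegrableOn (u' n) (Set.Ioo a b) := fun n =>
    memLp_one_iff_integrable.1 ((hW n).2.2.mono_exponent
      (by rw [show (1:ℝ≥0∞) = ENNReal.ofReal 1 by simp]
          exact ENNReal.ofReal_le_ofReal hp1))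
  have huaesm : ∀ n, AEStronglyMeasurable (u n) (volume.restrict (Set.Ioo a b)) :=
    fun n => (hW n).2.1.aestronglyMeasurable
  have hucont : ∀ n, ContinuousOn (u n) (Set.Ioo a b) :=
    fun n => cont_of_ftc (hu'i n) (hftc n)
  -- second energy bound
  have hE2 : ∀ n, (∫⁻ x in Set.Ioo a b, ENNReal.ofReal (((u n x)^2 - 1)^2)) ≤
      ENNReal.ofReal (ε n) * ENNReal.ofReal C' := by
    intro n
    have hpt : ∀ x : ℝ, ENNReal.ofReal (((u n x)^2 - 1)^2) ≤
        ENNReal.ofReal (ε n) *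
          ENNReal.ofReal ((ε n)⁻¹ * ((u n x)^2 - 1)^2 + ε n * (u' n x)^2) := by
      intro x
      rw [← ENNReal.ofReal_mul (hεpos n).le]
      apply ENNReal.ofReal_le_ofReal
      have heq : (ε n) * ((ε n)⁻¹ * ((u n x)^2 - 1)^2 + ε n * (u' n x)^2) =
          ((u n x)^2 - 1)^2 + (ε n)^2 * (u' n x)^2 := by
        field_simp [(hεpos n).ne']
      rw [heq]
      nlinarith [mul_nonneg (sq_nonneg (ε n)) (sq_nonneg (u' n x))]
    calc (∫⁻ x in Set.Ioo a b, ENNReal.ofReal (((u n x)^2 - 1)^2))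
        ≤ ∫⁻ x in Set.Ioo a b, ENNReal.ofReal (ε n) *
            ENNReal.ofReal ((ε n)⁻¹ * ((u n x)^2 - 1)^2 + ε n * (u' n x)^2) :=
          lintegral_mono hpt
      _ = ENNReal.ofReal (ε n) * ∫⁻ x in Set.Ioo a b,
            ENNReal.ofReal ((ε n)⁻¹ * ((u n x)^2 - 1)^2 + ε n * (u' n x)^2) :=
          lintegral_const_mul' _ _ ENNReal.ofReal_ne_top
      _ ≤ ENNReal.ofReal (ε n) * ENNReal.ofReal C' := mul_le_mul_right (hE n) _
  have hJ3 : ∀ n, (∫ s in Set.Ioo a b, h3f (u n s) * |u' n s|) ≤ C' / 2 := by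
    intro n
    have := integral_h_le (a := a) (b := b) hC'0.le (hεpos n) (by norm_num : (0:ℝ) ≤ 1)
      h3f_cont h3f_nonneg h3f_le (fun s => by rw [one_mul]; exact h3f_le' s)
      (hucont n) (hu'i n) (hE n)
    linarith
  have hEvar : ∀ n, eVariationOn (fun x => Tc (u n x)) (Set.Ioo a b) ≤
      ENNReal.ofReal (4/3 * C') :=
    fun n => evar_Tc hC'0.le (hεpos n) (hucont n) (hu'i n) (hftc n) (hE n)
  -- tail where ε is small
  have htail : ∀ᶠ n in atTop, ε n < (b - a) / C' :=
    hε0.eventually_lt_const (div_pos (by linarith) hC'0)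
  obtain ⟨N₁, hN₁⟩ := eventually_atTop.1 htail
  set M₀ := 3 + C' with hM₀def
  have hsup : ∀ n, N₁ ≤ n → ∀ x ∈ Set.Ioo a b, |u n x| ≤ M₀ := by
    intro n hn
    apply sup_bound hab hC'1 (hεpos n) ?_ (hucont n) (hu'i n) (hftc n) (hE2 n) (hJ3 n)
    exact (lt_div_iff₀ hC'0).1 (hN₁ n hn)
  -- bounded variation structure
  set v : ℕ → ℝ → ℝ := fun n x => Tc (u n x) with hvdef
  have hvBV : ∀ n, BoundedVariationOn (v n) (Set.Ioo a b) := fun n =>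
    ne_top_of_le_ne_top ENNReal.ofReal_ne_top (hEvar n)
  have hvLBV : ∀ n, LocallyBoundedVariationOn (v n) (Set.Ioo a b) :=
    fun n => (hvBV n).locallyBoundedVariationOn
  have hvabs : ∀ n x, |v n x| ≤ 1 := fun n x => Tc_abs_le _
  set V₀ := 4/3 * C' with hV₀def
  have hV₀0 : 0 ≤ V₀ := by rw [hV₀def]; linarith
  set pf : ℕ → ℝ → ℝ := fun n => variationOnFromTo (v n) (Set.Ioo a b) ((a+b)/2) with hpfdef
  have hpmono : ∀ n, MonotoneOn (pf n) (Set.Ioo a b) :=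
    fun n => variationOnFromTo.monotoneOn (hvLBV n) hmid
  have hpbd : ∀ n, ∀ x ∈ Set.Ioo a b, pf n x ∈ Set.Icc (-V₀) V₀ := by
    intro n x _
    have hbound : ∀ y z : ℝ,
        (eVariationOn (v n) (Set.Ioo a b ∩ Set.Icc y z)).toReal ≤ V₀ := fun y z =>
      ENNReal.toReal_le_of_le_ofReal hV₀0
        (le_trans (eVariationOn.mono _ inter_subset_left) (hEvar n))
    rcases le_total ((a+b)/2) x with hle | hle
    · simp only [hpfdef]
      rw [variationOnFromTo.eq_of_le _ _ hle]
      exact ⟨le_trans (by linarith) ENNReal.toReal_nonneg, hbound _ _⟩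
    · simp only [hpfdef]
      rw [variationOnFromTo.eq_of_ge _ _ hle]
      constructor
      · exact neg_le_neg (hbound _ _)
      · exact le_trans (neg_nonpos_of_nonneg ENNReal.toReal_nonneg) hV₀0
  set qf : ℕ → ℝ → ℝ := fun n x => pf n x - v n x with hqfdef
  have hqmono : ∀ n, MonotoneOn (qf n) (Set.Ioo a b) := by
    intro n
    have h := variationOnFromTo.sub_self_monotoneOn (hvLBV n) hmid
    intro x hx y hy hxy
    exact h hx hy hxy
  have hqbd : ∀ n, ∀ x ∈ Set.Ioo a b, qf n x ∈ Set.Icc (-(V₀+1)) (V₀+1) := by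
    intro n x hx
    have h1 := hpbd n x hx
    have h2 := abs_le.1 (hvabs n x)
    constructor
    · simp only [hqfdef]
      linarith [h1.1, h2.2]
    · simp only [hqfdef]
      linarith [h1.2, h2.1]
  -- Helly selection, twice
  obtain ⟨φ₁, hφ₁, P, hPmono, hPbd, hPbad⟩ := helly_mono hV₀0 pf hpmono hpbd
  obtain ⟨φ₂, hφ₂, Q, hQmono, hQbd, hQbad⟩ := helly_mono
    (by linarith : (0:ℝ) ≤ V₀+1)
    (fun k => qf (φ₁ k)) (fun k => hqmono (φ₁ k)) (fun k => hqbd (φ₁ k))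
  refine ⟨φ₁ ∘ φ₂, hφ₁.comp hφ₂, ?_⟩
  set vL : ℝ → ℝ := fun x => P x - Q x with hvLdef
  set R : ℝ → ℝ := Function.rightLim P with hRdef
  set S : ℝ → ℝ := Function.rightLim Q with hSdef
  have hRmono : Monotone R := hPmono.rightLim
  have hSmono : Monotone S := hQmono.rightLim
  set w : ℝ → ℝ := fun x => R x - S x with hwdef
  -- convergence off a countable set
  have hconv : ∀ x ∈ Set.Ioo a b,
      x ∉ {x | x ∈ Set.Ioo a b ∧ ¬ Tendsto (fun k => pf (φ₁ k) x) atTop (𝓝 (P x))} →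
      x ∉ {x | x ∈ Set.Ioo a b ∧
        ¬ Tendsto (fun k => (fun k => qf (φ₁ k)) (φ₂ k) x) atTop (𝓝 (Q x))} →
      Tendsto (fun k => v (φ₁ (φ₂ k)) x) atTop (𝓝 (vL x)) := by
    intro x hx h1 h2
    simp only [mem_setOf_eq, not_and, not_not] at h1 h2
    have hp : Tendsto (fun k => pf (φ₁ (φ₂ k)) x) atTop (𝓝 (P x)) :=
      (h1 hx).comp hφ₂.tendsto_atTop
    have hq : Tendsto (fun k => qf (φ₁ (φ₂ k)) x) atTop (𝓝 (Q x)) := h2 hx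
    have heq : (fun k => v (φ₁ (φ₂ k)) x) =
        fun k => pf (φ₁ (φ₂ k)) x - qf (φ₁ (φ₂ k)) x := by
      funext k
      simp only [hqfdef]
      ring
    rw [heq]
    exact hp.sub hq
  set μm := volume.restrict (Set.Ioo a b) with hμm
  have hcnull : ∀ (s : Set ℝ), s.Countable → μm s = 0 := by
    intro s hs
    rw [hμm, Measure.restrict_apply' measurableSet_Ioo]
    exact measure_mono_null inter_subset_left (hs.measure_zero _)
  have haeB : ∀ᵐ x ∂μm, Tendsto (fun k => v (φ₁ (φ₂ k)) x) atTop (𝓝 (vL x)) := by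
    filter_upwards [ae_restrict_mem measurableSet_Ioo,
      measure_eq_zero_iff_ae_notMem.1 (hcnull _ hPbad),
      measure_eq_zero_iff_ae_notMem.1 (hcnull _ hQbad)] with x hx h1 h2
    exact hconv x hx h1 h2
  -- limit is ±1 a.e.
  have hPm : Measurable P := hPmono.measurable
  have hQm : Measurable Q := hQmono.measurable
  have hvLm : Measurable vL := hPm.sub hQm
  have hvL1 : ∀ᵐ x ∂μm, vL x = 1 ∨ vL x = -1 := by
    have hFcont : Continuous (fun s : ℝ => ENNReal.ofReal ((s^2 - 1)^2)) :=
      ENNReal.continuous_ofReal.comp (by fun_prop)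
    have hmeas : ∀ k, AEMeasurable
        (fun x => ENNReal.ofReal (((v (φ₁ (φ₂ k)) x)^2 - 1)^2)) μm := by
      intro k
      have h1 : AEMeasurable (v (φ₁ (φ₂ k))) μm :=
        (Tc_cont.comp_aestronglyMeasurable (huaesm _)).aemeasurable
      exact hFcont.measurable.comp_aemeasurable h1
    have hbnd : ∀ k, (∫⁻ x, ENNReal.ofReal (((v (φ₁ (φ₂ k)) x)^2 - 1)^2) ∂μm) ≤
        (ENNReal.ofReal (16/9) * ENNReal.ofReal C') * ENNReal.ofReal (ε (φ₁ (φ₂ k))) := by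
      intro k
      calc (∫⁻ x, ENNReal.ofReal (((v (φ₁ (φ₂ k)) x)^2 - 1)^2) ∂μm)
          ≤ ∫⁻ x, ENNReal.ofReal (16/9) *
              ENNReal.ofReal (((u (φ₁ (φ₂ k)) x)^2 - 1)^2) ∂μm := by
            apply lintegral_mono
            intro x
            exact le_trans (ENNReal.ofReal_le_ofReal (Tc_sq_le (u (φ₁ (φ₂ k)) x)))
              (le_of_eq (ENNReal.ofReal_mul (by norm_num)))
        _ = ENNReal.ofReal (16/9) *
              ∫⁻ x, ENNReal.ofReal (((u (φ₁ (φ₂ k)) x)^2 - 1)^2) ∂μm :=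
            lintegral_const_mul' _ _ ENNReal.ofReal_ne_top
        _ ≤ ENNReal.ofReal (16/9) *
              (ENNReal.ofReal (ε (φ₁ (φ₂ k))) * ENNReal.ofReal C') :=
            mul_le_mul_right (hE2 _) _
        _ = (ENNReal.ofReal (16/9) * ENNReal.ofReal C') *
              ENNReal.ofReal (ε (φ₁ (φ₂ k))) := by ring
    have htends : Tendsto (fun k => (ENNReal.ofReal (16/9) * ENNReal.ofReal C') *
        ENNReal.ofReal (ε (φ₁ (φ₂ k)))) atTop (𝓝 0) := by
      have h1 : Tendsto (fun k => ε (φ₁ (φ₂ k))) atTop (𝓝 0) :=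
        hε0.comp (hφ₁.comp hφ₂).tendsto_atTop
      have h2 : Tendsto (fun k => ENNReal.ofReal (ε (φ₁ (φ₂ k)))) atTop (𝓝 0) := by
        have := ENNReal.tendsto_ofReal h1
        simpa using this
      have h3 := ENNReal.Tendsto.const_mul
        (a := ENNReal.ofReal (16/9) * ENNReal.ofReal C') h2
        (Or.inr (ENNReal.mul_ne_top ENNReal.ofReal_ne_top ENNReal.ofReal_ne_top))
      simpa using h3
    have hA : (∫⁻ x, ENNReal.ofReal (((vL x)^2 - 1)^2) ∂μm) = 0 := by
      have h1 : (∫⁻ x, ENNReal.ofReal (((vL x)^2 - 1)^2) ∂μm) =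
          ∫⁻ x, liminf (fun k => ENNReal.ofReal (((v (φ₁ (φ₂ k)) x)^2 - 1)^2)) atTop ∂μm := by
        apply lintegral_congr_ae
        filter_upwards [haeB] with x hx
        exact (((hFcont.tendsto (vL x)).comp hx).liminf_eq).symm
      have h2 := lintegral_liminf_le' (u := atTop) hmeas
      have h3 : liminf (fun k =>
          ∫⁻ x, ENNReal.ofReal (((v (φ₁ (φ₂ k)) x)^2 - 1)^2) ∂μm) atTop ≤ 0 := by
        have h4 := liminf_le_liminf (Eventually.of_forall hbnd)
          (f := atTop)
        rw [htends.liminf_eq] at h4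
        exact h4
      rw [h1]
      exact le_antisymm (le_trans h2 h3) zero_le
    have hmeas2 : AEMeasurable (fun x => ENNReal.ofReal (((vL x)^2 - 1)^2)) μm :=
      (Measurable.ennreal_ofReal (by fun_prop)).aemeasurable
    have h0 := (lintegral_eq_zero_iff' hmeas2).1 hA
    filter_upwards [h0] with x hx
    simp only [Pi.zero_apply, ENNReal.ofReal_eq_zero] at hx
    have h1 : ((vL x)^2 - 1)^2 = 0 := le_antisymm hx (sq_nonneg _)
    have h2 : (vL x)^2 - 1 = 0 := sq_eq_zero_iff.1 h1
    have h3 : (vL x - 1) * (vL x + 1) = 0 := by linear_combination h2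
    rcases mul_eq_zero.1 h3 with h | h
    · left; linarith
    · right; linarith
  -- w agrees with vL a.e.
  have hwv : ∀ᵐ x ∂μm, w x = vL x := by
    have hnull : μm ({x | ¬ContinuousAt P x} ∪ {x | ¬ContinuousAt Q x}) = 0 :=
      hcnull _ (hPmono.countable_not_continuousAt.union hQmono.countable_not_continuousAt)
    filter_upwards [measure_eq_zero_iff_ae_notMem.1 hnull] with x hx
    simp only [mem_union, mem_setOf_eq, not_or, not_not] at hx
    have hP : R x = P x :=
      hPmono.continuousWithinAt_Ioi_iff_rightLim_eq.1 hx.1.continuousWithinAt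
    have hQ : S x = Q x :=
      hQmono.continuousWithinAt_Ioi_iff_rightLim_eq.1 hx.2.continuousWithinAt
    simp only [hwdef, hvLdef]
    rw [hP, hQ]
  -- w takes values ±1 on Ioo
  have hwpm : ∀ x ∈ Set.Ioo a b, w x = -1 ∨ w x = 1 := by
    set S₀ := {y | y ∈ Set.Ioo a b ∧ (vL y = 1 ∨ vL y = -1)} with hS₀def
    have hS₀null : volume (Set.Ioo a b \ S₀) = 0 := by
      have h1 : μm {y | ¬ (vL y = 1 ∨ vL y = -1)} = 0 := ae_iff.1 hvL1
      rw [hμm, Measure.restrict_apply' measurableSet_Ioo] at h1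
      apply measure_mono_null ?_ h1
      intro y hy
      exact ⟨fun hcon => hy.2 ⟨hy.1, hcon⟩, hy.1⟩
    intro x hx
    have hne : ((𝓝[>] x) ⊓ 𝓟 S₀).NeBot := by
      rw [inf_principal_neBot_iff]
      intro U hU
      obtain ⟨u₀, hu₀, hsub⟩ := mem_nhdsGT_iff_exists_Ioo_subset.1 hU
      set u₁ := min u₀ b with hu₁def
      have hxu₁ : x < u₁ := lt_min hu₀ hx.2
      have hpos : 0 < volume (Set.Ioo x u₁) := by
        rw [Real.volume_Ioo]
        exact ENNReal.ofReal_pos.2 (by linarith)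
      have hnonempty : (Set.Ioo x u₁ ∩ S₀).Nonempty := by
        rw [Set.nonempty_iff_ne_empty]
        intro hcon
        have hsubset : Set.Ioo x u₁ ⊆ Set.Ioo a b \ S₀ := by
          intro t ht
          refine ⟨⟨lt_trans hx.1 ht.1, lt_of_lt_of_le ht.2 (min_le_right _ _)⟩, fun hmem => ?_⟩
          exact absurd hcon (Set.nonempty_iff_ne_empty.1 ⟨t, ht, hmem⟩)
        have := measure_mono_null hsubset hS₀null
        rw [this] at hpos
        exact lt_irrefl _ hpos
      obtain ⟨t, ht1, ht2⟩ := hnonempty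
      exact ⟨t, hsub ⟨ht1.1, lt_of_lt_of_le ht1.2 (min_le_left _ _)⟩, ht2⟩
    have htend : Tendsto vL ((𝓝[>] x) ⊓ 𝓟 S₀) (𝓝 (w x)) := by
      have h1 : Tendsto P (𝓝[>] x) (𝓝 (R x)) := hPmono.tendsto_rightLim x
      have h2 : Tendsto Q (𝓝[>] x) (𝓝 (S x)) := hQmono.tendsto_rightLim x
      exact (h1.sub h2).mono_left inf_le_left
    have hev : ∀ᶠ y in ((𝓝[>] x) ⊓ 𝓟 S₀), vL y ∈ ({-1, 1} : Set ℝ) := by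
      apply eventually_inf_principal.2
      apply Eventually.of_forall
      intro y hy
      rcases hy.2 with h | h
      · rw [h]; right; rfl
      · rw [h]; left; rfl
    have hclosed : IsClosed ({-1, 1} : Set ℝ) :=
      (Set.toFinite ({-1, 1} : Set ℝ)).isClosed
    have hmem := hclosed.mem_of_tendsto htend hev
    rcases hmem with h | h
    · left; simpa using h
    · right; simpa using h
  -- w has bounded variation
  have hRbd : ∀ x, -V₀ ≤ R x ∧ R x ≤ V₀ := fun x =>
    ⟨le_trans (hPbd x).1 (hPmono.le_rightLim le_rfl),
     le_trans (hPmono.rightLim_le (lt_add_one x)) (hPbd (x+1)).2⟩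
  have hSbd : ∀ x, -(V₀+1) ≤ S x ∧ S x ≤ V₀+1 := fun x =>
    ⟨le_trans (hQbd x).1 (hQmono.le_rightLim le_rfl),
     le_trans (hQmono.rightLim_le (lt_add_one x)) (hQbd (x+1)).2⟩
  have hwBV : BoundedVariationOn w (Set.Ioo a b) := by
    have hmono_bound : ∀ (F : ℝ → ℝ), Monotone F → ∀ (MF : ℝ),
        (∀ x, -MF ≤ F x ∧ F x ≤ MF) →
        eVariationOn F (Set.Ioo a b) ≤ ENNReal.ofReal (2 * MF) := by
      intro F hF MF hMF
      have h1 := MonotoneOn.eVariationOn_le (hF.monotoneOn univ) (mem_univ a) (mem_univ b)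
      refine le_trans (le_trans (eVariationOn.mono _ ?_) h1) (ENNReal.ofReal_le_ofReal ?_)
      · intro t ht
        exact ⟨mem_univ t, ht.1.le, ht.2.le⟩
      · linarith [(hMF b).2, (hMF a).1]
    have h3 := eVariationOn_sub_le R S (Set.Ioo a b)
    have h4 : eVariationOn w (Set.Ioo a b) ≤
        ENNReal.ofReal (2 * V₀) + ENNReal.ofReal (2 * (V₀+1)) :=
      le_trans h3 (add_le_add (hmono_bound R hRmono V₀ hRbd)
        (hmono_bound S hSmono (V₀+1) hSbd))
    exact ne_top_of_le_ne_top
      (ENNReal.add_ne_top.2 ⟨ENNReal.ofReal_ne_top, ENNReal.ofReal_ne_top⟩) h4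
  -- L^p convergence
  have hw_m : AEStronglyMeasurable w μm :=
    (hRmono.measurable.sub hSmono.measurable).aestronglyMeasurable
  have hv_m : ∀ n, AEStronglyMeasurable (v n) μm :=
    fun n => Tc_cont.comp_aestronglyMeasurable (huaesm n)
  have hwabs : ∀ x, |w x| ≤ V₀ + (V₀ + 1) := by
    intro x
    have h1 := hRbd x
    have h2 := hSbd x
    simp only [hwdef]
    rw [abs_le]
    constructor <;> linarith [h1.1, h1.2, h2.1, h2.2]
  have hApart : Tendsto (fun k => eLpNorm (fun x => v (φ₁ (φ₂ k)) x - w x)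
      (ENNReal.ofReal p) μm) atTop (𝓝 0) := by
    apply tendsto_eLpNorm_zero hp0
    set c₀ := 1 + (V₀ + (V₀ + 1)) with hc₀def
    have hc₀0 : 0 < c₀ := by rw [hc₀def]; linarith
    have hdom : ∀ k x, ENNReal.ofReal (|v (φ₁ (φ₂ k)) x - w x| ^ p) ≤
        ENNReal.ofReal (c₀ ^ p) := by
      intro k x
      apply ENNReal.ofReal_le_ofReal
      apply Real.rpow_le_rpow (abs_nonneg _) ?_ hp0.le
      calc |v (φ₁ (φ₂ k)) x - w x| ≤ |v (φ₁ (φ₂ k)) x| + |w x| := abs_sub _ _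
        _ ≤ 1 + (V₀ + (V₀ + 1)) := add_le_add (hvabs _ _) (hwabs x)
    have hcont2 : Continuous (fun s : ℝ => ENNReal.ofReal (|s| ^ p)) := by
      apply ENNReal.continuous_ofReal.comp
      rw [continuous_iff_continuousAt]
      intro s
      exact (Real.continuousAt_rpow_const _ _ (Or.inr hp0.le)).comp
        continuous_abs.continuousAt
    have h := tendsto_lintegral_of_dominated_convergence'
      (F := fun k x => ENNReal.ofReal (|v (φ₁ (φ₂ k)) x - w x| ^ p))
      (f := fun _ => (0:ℝ≥0∞)) (bound := fun _ => ENNReal.ofReal (c₀ ^ p))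
      (fun k => (hcont2.measurable.comp_aemeasurable
        (((hv_m _).sub hw_m).aemeasurable)))
      (fun k => Eventually.of_forall (fun x => hdom k x))
      (by rw [lintegral_const]
          exact ENNReal.mul_ne_top ENNReal.ofReal_ne_top (measure_ne_top μm univ))
      (by filter_upwards [haeB, hwv] with x hx hwx
          have h1 : Tendsto (fun k => v (φ₁ (φ₂ k)) x - w x) atTop (𝓝 0) := by
            have := hx.sub (tendsto_const_nhds (x := w x))
            rw [← hwx] at this
            simpa using this
          have h2 := (hcont2.tendsto 0).comp h1
          simpa [Function.comp_def, Real.zero_rpow hp0.ne'] using h2)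
    simpa using h
  have hBpart : Tendsto (fun k => eLpNorm
      (fun x => u (φ₁ (φ₂ k)) x - v (φ₁ (φ₂ k)) x) (ENNReal.ofReal p) μm)
      atTop (𝓝 0) := by
    apply tendsto_eLpNorm_zero hp0
    rw [ENNReal.tendsto_nhds_zero]
    intro η hη
    rcases eq_top_or_lt_top η with rfl | hηt
    · exact Eventually.of_forall (fun _ => le_top)
    have hηr : 0 < η.toReal := ENNReal.toReal_pos hη.ne' hηt.ne
    set ηr := η.toReal with hηrdef
    set K := (M₀ + 1) ^ p with hKdef
    have hM₀pos : 0 < M₀ + 1 := by rw [hM₀def]; linarith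
    have hKpos : 0 < K := Real.rpow_pos_of_pos hM₀pos p
    set δ := min 1 (ηr / (2 * (K * (b - a) + 1))) with hδdef
    have hδpos : 0 < δ := by
      apply lt_min one_pos
      apply div_pos hηr
      nlinarith [mul_pos hKpos (by linarith : (0:ℝ) < b - a)]
    have hδ1 : δ ≤ 1 := min_le_left _ _
    have hsmall : ∀ᶠ k in atTop, ENNReal.ofReal (K / δ) *
        (ENNReal.ofReal (ε (φ₁ (φ₂ k))) * ENNReal.ofReal C') ≤
        ENNReal.ofReal (ηr/2) := by
      have h1 : Tendsto (fun k => ENNReal.ofReal (K / δ) *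
          (ENNReal.ofReal (ε (φ₁ (φ₂ k))) * ENNReal.ofReal C')) atTop (𝓝 0) := by
        have h2 : Tendsto (fun k => ε (φ₁ (φ₂ k))) atTop (𝓝 0) :=
          hε0.comp (hφ₁.comp hφ₂).tendsto_atTop
        have h3 : Tendsto (fun k => ENNReal.ofReal (ε (φ₁ (φ₂ k)))) atTop (𝓝 0) := by
          have := ENNReal.tendsto_ofReal h2
          simpa using this
        have h4 : Tendsto (fun k => ENNReal.ofReal (ε (φ₁ (φ₂ k))) *
            ENNReal.ofReal C') atTop (𝓝 0) := by
          have := ENNReal.Tendsto.mul_const (b := ENNReal.ofReal C') h3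
            (Or.inr ENNReal.ofReal_ne_top)
          simpa using this
        have h5 := ENNReal.Tendsto.const_mul (a := ENNReal.ofReal (K / δ)) h4
          (Or.inr ENNReal.ofReal_ne_top)
        simpa using h5
      exact ENNReal.tendsto_nhds_zero.1 h1 _ (ENNReal.ofReal_pos.2 (by linarith))
    have hNk : ∀ᶠ k in atTop, N₁ ≤ φ₁ (φ₂ k) :=
      (hφ₁.comp hφ₂).tendsto_atTop.eventually_ge_atTop N₁
    filter_upwards [hsmall, hNk] with k hk1 hk2
    have hpt : ∀ x ∈ Set.Ioo a b,
        ENNReal.ofReal (|u (φ₁ (φ₂ k)) x - v (φ₁ (φ₂ k)) x| ^ p) ≤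
        ENNReal.ofReal (K * δ) + ENNReal.ofReal (K / δ) *
          ENNReal.ofReal (((u (φ₁ (φ₂ k)) x)^2 - 1)^2) := by
      intro x hx
      set n := φ₁ (φ₂ k) with hn
      set d := |u n x - v n x| with hddef
      have hd0 : 0 ≤ d := abs_nonneg _
      have hdM : d ≤ M₀ + 1 := by
        calc d ≤ |u n x| + |v n x| := abs_sub _ _
          _ ≤ M₀ + 1 := add_le_add (hsup n hk2 x hx) (hvabs n x)
      have hdsq : d ≤ |(u n x)^2 - 1| := sub_Tc_le (u n x)
      have hone_le_K : (1:ℝ) ≤ K := by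
        rw [hKdef]
        calc (1:ℝ) = 1 ^ p := (Real.one_rpow p).symm
          _ ≤ (M₀ + 1) ^ p := Real.rpow_le_rpow (by norm_num) (by rw [hM₀def]; linarith) hp0.le
      have hstep1 : d ^ p ≤ K * min d 1 := by
        rcases le_total d 1 with h | h
        · rw [min_eq_left h]
          rcases eq_or_lt_of_le hd0 with heq | hdpos
          · rw [← heq, Real.zero_rpow hp0.ne']
            positivity
          · calc d ^ p ≤ d ^ (1:ℝ) :=
                Real.rpow_le_rpow_of_exponent_ge hdpos h hp1
              _ = d := Real.rpow_one d
              _ = 1 * d := (one_mul d).symm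
              _ ≤ K * d := mul_le_mul_of_nonneg_right hone_le_K hd0
        · rw [min_eq_right h, mul_one, hKdef]
          exact Real.rpow_le_rpow hd0 hdM hp0.le
      have hstep2 : min d 1 ≤ δ + d^2 / δ := by
        rcases le_total d δ with h | h
        · calc min d 1 ≤ d := min_le_left _ _
            _ ≤ δ := h
            _ ≤ δ + d^2/δ := le_add_of_nonneg_right (by positivity)
        · rcases le_total d 1 with h4 | h4
          · calc min d 1 ≤ d := min_le_left _ _
              _ ≤ d * (d/δ) := le_mul_of_one_le_right hd0 ((one_le_div hδpos).2 h)
              _ = d^2/δ := by ring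
              _ ≤ δ + d^2/δ := le_add_of_nonneg_left hδpos.le
          · calc min d 1 ≤ 1 := min_le_right _ _
              _ ≤ d^2/δ := by
                  rw [le_div_iff₀ hδpos]
                  nlinarith
              _ ≤ δ + d^2/δ := le_add_of_nonneg_left hδpos.le
      have hd2 : d^2 ≤ ((u n x)^2 - 1)^2 := by
        calc d^2 ≤ |(u n x)^2-1|^2 := by
              apply pow_le_pow_left₀ hd0 hdsq
          _ = ((u n x)^2-1)^2 := sq_abs _
      have hcomb : d ^ p ≤ K * δ + (K/δ) * (((u n x)^2-1)^2) := by
        calc d^p ≤ K * min d 1 := hstep1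
          _ ≤ K * (δ + d^2/δ) := mul_le_mul_of_nonneg_left hstep2 hKpos.le
          _ = K * δ + K/δ * d^2 := by ring
          _ ≤ K * δ + K/δ * (((u n x)^2-1)^2) := by
              apply add_le_add_right
              exact mul_le_mul_of_nonneg_left hd2 (by positivity)
      calc ENNReal.ofReal (d^p)
          ≤ ENNReal.ofReal (K*δ + K/δ * (((u n x)^2-1)^2)) :=
            ENNReal.ofReal_le_ofReal hcomb
        _ = ENNReal.ofReal (K*δ) + ENNReal.ofReal (K/δ * (((u n x)^2-1)^2)) :=
            ENNReal.ofReal_add (mul_nonneg hKpos.le hδpos.le)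
              (mul_nonneg (div_pos hKpos hδpos).le (sq_nonneg _))
        _ = ENNReal.ofReal (K*δ) + ENNReal.ofReal (K/δ) *
              ENNReal.ofReal (((u n x)^2-1)^2) := by
            rw [ENNReal.ofReal_mul (div_pos hKpos hδpos).le]
    calc (∫⁻ x, ENNReal.ofReal (|u (φ₁ (φ₂ k)) x - v (φ₁ (φ₂ k)) x| ^ p) ∂μm)
        ≤ ∫⁻ x in Set.Ioo a b, (ENNReal.ofReal (K * δ) + ENNReal.ofReal (K / δ) *
            ENNReal.ofReal (((u (φ₁ (φ₂ k)) x)^2 - 1)^2)) := by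
          rw [hμm]
          apply lintegral_mono_ae
          exact (ae_restrict_iff' measurableSet_Ioo).2 (ae_of_all _ hpt)
      _ = ENNReal.ofReal (K*δ) * volume (Set.Ioo a b) + ENNReal.ofReal (K/δ) *
            ∫⁻ x in Set.Ioo a b, ENNReal.ofReal (((u (φ₁ (φ₂ k)) x)^2-1)^2) := by
          rw [lintegral_add_left measurable_const, setLIntegral_const,
            lintegral_const_mul' _ _ ENNReal.ofReal_ne_top]
      _ ≤ ENNReal.ofReal (ηr/2) + ENNReal.ofReal (ηr/2) := by
          apply add_le_add
          · rw [Real.volume_Ioo, ← ENNReal.ofReal_mul (show (0:ℝ) ≤ K*δ by positivity)]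
            apply ENNReal.ofReal_le_ofReal
            have hδ2 : δ ≤ ηr / (2*(K*(b-a)+1)) := min_le_right _ _
            have hpos2 : (0:ℝ) < 2*(K*(b-a)+1) := by
              nlinarith [mul_pos hKpos (by linarith : (0:ℝ) < b - a)]
            rw [le_div_iff₀ hpos2] at hδ2
            nlinarith [mul_pos hKpos (by linarith : (0:ℝ) < b - a), hδpos]
          · calc ENNReal.ofReal (K/δ) *
                ∫⁻ x in Set.Ioo a b, ENNReal.ofReal (((u (φ₁ (φ₂ k)) x)^2-1)^2)
                ≤ ENNReal.ofReal (K/δ) *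
                  (ENNReal.ofReal (ε (φ₁ (φ₂ k))) * ENNReal.ofReal C') :=
                  mul_le_mul_right (hE2 _) _
              _ ≤ ENNReal.ofReal (ηr/2) := hk1
      _ = η := by
          rw [← ENNReal.ofReal_add (by positivity) (by positivity)]
          rw [show ηr/2 + ηr/2 = ηr by ring]
          exact ENNReal.ofReal_toReal hηt.ne
  refine ⟨w, hwpm, hwBV, ?_⟩
  show Tendsto (fun k => eLpNorm (fun x => u (φ₁ (φ₂ k)) x - w x)
    (ENNReal.ofReal p) μm) atTop (𝓝 0)
  have htri : ∀ k, eLpNorm (fun x => u (φ₁ (φ₂ k)) x - w x) (ENNReal.ofReal p) μm ≤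
      eLpNorm (fun x => u (φ₁ (φ₂ k)) x - v (φ₁ (φ₂ k)) x) (ENNReal.ofReal p) μm +
      eLpNorm (fun x => v (φ₁ (φ₂ k)) x - w x) (ENNReal.ofReal p) μm := by
    intro k
    have heq : (fun x => u (φ₁ (φ₂ k)) x - w x) =
        (fun x => u (φ₁ (φ₂ k)) x - v (φ₁ (φ₂ k)) x) +
        (fun x => v (φ₁ (φ₂ k)) x - w x) := by
      funext x
      simp only [Pi.add_apply]
      ring
    rw [heq]
    exact eLpNorm_add_le ((huaesm _).sub (hv_m _)) ((hv_m _).sub hw_m)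
      (by rw [show (1:ℝ≥0∞) = ENNReal.ofReal 1 by simp]
          exact ENNReal.ofReal_le_ofReal hp1)
  have hsum : Tendsto (fun k =>
      eLpNorm (fun x => u (φ₁ (φ₂ k)) x - v (φ₁ (φ₂ k)) x) (ENNReal.ofReal p) μm +
      eLpNorm (fun x => v (φ₁ (φ₂ k)) x - w x) (ENNReal.ofReal p) μm) atTop (𝓝 0) := by
    have := hBpart.add hApart
    simpa using this
  exact tendsto_of_tendsto_of_tendsto_of_le_of_le tendsto_const_nhds hsum
    (fun k => zero_le) htri

end
end

section
/- Let Ω = (a,b) be a non-empty bounded open interval and let 1 ≤ p < ∞. Let ε_n be a sequence of positive reals with ε_n → 0⁺, and let u_n ∈ W^{1,p}(Ω) be a sequence with C := sup_{n∈ℕ} ∫_Ω ε_n^{-1}(u_n²−1)² + ε_n|u_n'|² dx < ∞. If u ∈ BPV(Ω;{−1,1}) is a function such that some subsequence u_{n_k} converges to u in L^p(Ω) (such a subsequence exists), then essVar_Ω u ≤ (3/4)·C. -/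
open MeasureTheory Set Filter Topology
open scoped ENNReal NNReal

noncomputable section

section Helpers
open intervalIntegral

lemma young {ε A B : ℝ} (hε : 0 < ε) : 2 * (|A| * |B|) ≤ ε⁻¹ * A^2 + ε * B^2 := by
  have h1 : ε⁻¹ * A^2 = (|A|)^2 / ε := by rw [sq_abs]; ring
  rw [h1, ← sub_nonneg]
  have h2 : |A| ^ 2 / ε + ε * B ^ 2 - 2 * (|A| * |B|) = (|A| - ε * |B|)^2 / ε := by
    have hB : ε * B ^ 2 = (ε * |B|)^2 / ε := by rw [mul_pow, sq_abs]; field_simp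
    rw [hB]; field_simp; linarith [sq_abs A]
  rw [h2]; positivity


lemma aux_one_sub_sq_nonneg {c x : ℝ} (hc1 : c < 1) (h1 : -c ≤ x) (h2 : x ≤ c) :
    0 ≤ 1 - x^2 := by nlinarith

lemma aux_sq_mono_pos {x l : ℝ} (h0 : 0 ≤ x) (h : x ≤ l) : 1 - l^2 ≤ 1 - x^2 := by nlinarith

lemma aux_sq_mono_neg {x l : ℝ} (h0 : x < 0) (h : l ≤ x) : 1 - l^2 ≤ 1 - x^2 := by nlinarith

lemma aux_sq_le {c x : ℝ} (h1 : -c ≤ x) (h2 : x ≤ c) : x^2 ≤ c^2 := by nlinarith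

lemma aux_osc1 {x l1 l2 h c : ℝ} (hx1 : l1 ≤ x) (hx2 : x ≤ l2) (hstep : l2 - l1 = h)
    (hb1 : -c ≤ l1) (hb2 : l2 ≤ c) (hc : c ≤ 1) : 1 - x^2 ≤ (1 - l1^2) + 2*h := by
  nlinarith

lemma aux_osc2 {x l1 l2 h c : ℝ} (hx1 : l1 ≤ x) (hx2 : x ≤ l2) (hstep : l2 - l1 = h)
    (hb1 : -c ≤ l1) (hb2 : l2 ≤ c) (hc : c ≤ 1) : 1 - x^2 ≤ (1 - l2^2) + 2*h := by
  nlinarith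

lemma aux_cval {d : ℝ} (hd : 0 ≤ d) (hd1 : d ≤ 1) :
    8/3 - 4*d ≤ 2*(2*(1-d) - 2*(1-d)^3/3) := by nlinarith [sq_nonneg d, pow_nonneg hd 3]

set_option maxHeartbeats 1000000 in
lemma lemmaMM {η : ℝ} (hη : 0 < η) (hη1 : η ≤ 1) :
    ∃ δ : ℝ, 0 < δ ∧ δ < 1 ∧ ∀ (a b ε : ℝ) (g g' : ℝ → ℝ), 0 < ε →
    (∀ x ∈ Ioo a b, ∀ y ∈ Ioo a b, g y - g x = ∫ t in x..y, g' t) →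
    IntegrableOn g' (Ioo a b) →
    ∀ s t : ℝ, s ∈ Ioo a b → t ∈ Ioo a b → s < t → g s ≤ -1 + δ → 1 - δ ≤ g t →
    ENNReal.ofReal (8/3 - η) ≤
      ∫⁻ x in Ioo s t, ENNReal.ofReal (ε⁻¹ * ((g x)^2 - 1)^2 + ε * (g' x)^2) := by
  refine ⟨η/16, by positivity, by linarith, ?_⟩
  intro a b ε g g' hε hFTC hint s t hs ht hst hgs hgt
  set δ : ℝ := η/16 with hδdef
  set c : ℝ := 1 - δ with hcdef
  have hδ0 : 0 < δ := by positivity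
  have hδ1 : δ ≤ 1/16 := by rw [hδdef]; linarith
  have hc0 : 0 < c := by rw [hcdef]; linarith
  have hc1 : c < 1 := by rw [hcdef]; linarith
  set m : ℕ := ⌈(128:ℝ)/η⌉₊ with hmdef
  have hm1 : (128:ℝ)/η ≤ m := Nat.le_ceil _
  have hmpos : (0:ℝ) < m := lt_of_lt_of_le (by positivity) hm1
  set h : ℝ := 2*c/m with hhdef
  have hh0 : 0 < h := by positivity
  have hhm : h * m = 2*c := by rw [hhdef]; field_simp
  have hh' : h ≤ η/64 := by
    rw [hhdef, div_le_iff₀ hmpos]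
    calc 2*c ≤ 2 := by nlinarith
    _ ≤ η/64 * (128/η) := by
        rw [div_mul_div_comm, le_div_iff₀ (by positivity)]; nlinarith
    _ ≤ η/64 * m := by apply mul_le_mul_of_nonneg_left hm1; positivity
  set lev : ℕ → ℝ := fun j => -c + j * h with hlevdef
  have hlev0 : lev 0 = -c := by simp [hlevdef]
  have hlevm : lev m = c := by simp only [hlevdef, hhdef]; field_simp; ring
  have hlevstep : ∀ j, lev (j+1) - lev j = h := by
    intro j; simp only [hlevdef]; push_cast; ring
  have hlevmono : ∀ {i j : ℕ}, i ≤ j → lev i ≤ lev j := by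
    intro i j hij
    simp only [hlevdef]
    have : (i:ℝ) ≤ j := by exact_mod_cast hij
    nlinarith
  have hlevmem : ∀ j ≤ m, -c ≤ lev j ∧ lev j ≤ c := fun j hj =>
    ⟨hlev0 ▸ hlevmono (Nat.zero_le _), hlevm ▸ hlevmono hj⟩
  -- continuity of g on [s,t]
  have hIcc : Icc s t ⊆ Ioo a b := fun x hx =>
    ⟨lt_of_lt_of_le hs.1 hx.1, lt_of_le_of_lt hx.2 ht.2⟩
  have hint' : IntegrableOn g' (Icc s t) := hint.mono_set hIcc
  have gcont : ContinuousOn g (Icc s t) := by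
    have hcont : ContinuousOn (fun x => g s + ∫ u in Ioc s x, g' u) (Icc s t) :=
      continuousOn_const.add (intervalIntegral.continuousOn_primitive hint')
    apply hcont.congr
    intro x hx
    have h2 := hFTC s hs x (hIcc hx)
    rw [intervalIntegral.integral_of_le hx.1] at h2
    dsimp only; linarith [h2]
  have hgsc : g s ≤ -c := by rw [hcdef]; linarith
  have hgtc : c ≤ g t := by rw [hcdef]; linarith
  -- hitting times
  set A : ℕ → Set ℝ := fun j => {x ∈ Icc s t | g x = lev j} with hAdef
  have hAclosed : ∀ j, IsClosed (A j) := by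
    intro j
    have heq : A j = Icc s t ∩ g ⁻¹' {lev j} := by ext x; simp [hAdef]
    rw [heq]
    exact gcont.preimage_isClosed_of_isClosed isClosed_Icc isClosed_singleton
  have hAne : ∀ j ≤ m, (A j).Nonempty := by
    intro j hj
    have hmem : lev j ∈ Icc (g s) (g t) :=
      ⟨le_trans hgsc (hlevmem j hj).1, le_trans (hlevmem j hj).2 hgtc⟩
    obtain ⟨x, hx, hgx⟩ := intermediate_value_Icc hst.le gcont hmem
    exact ⟨x, hx, hgx⟩
  set ξ : ℕ → ℝ := fun j => sInf (A j) with hξdef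
  have hξmem : ∀ j ≤ m, ξ j ∈ A j := by
    intro j hj
    exact (hAclosed j).csInf_mem (hAne j hj)
      ⟨s, fun x hx => hx.1.1⟩
  have hξIcc : ∀ j ≤ m, ξ j ∈ Icc s t := fun j hj => (hξmem j hj).1
  have hgξ : ∀ j ≤ m, g (ξ j) = lev j := fun j hj => (hξmem j hj).2
  have hbddA : ∀ j, BddBelow (A j) := fun j => ⟨s, fun x hx => hx.1.1⟩
  have hξmono : ∀ i j, i ≤ j → j ≤ m → ξ i ≤ ξ j := by
    intro i j hij hj
    have hsξ : s ≤ ξ j := (hξIcc j hj).1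
    have hmem : lev i ∈ Icc (g s) (g (ξ j)) := by
      refine ⟨le_trans hgsc (hlevmem i (hij.trans hj)).1, ?_⟩
      rw [hgξ j hj]; exact hlevmono hij
    obtain ⟨z, hz, hgz⟩ := intermediate_value_Icc hsξ
      (gcont.mono (Icc_subset_Icc le_rfl (hξIcc j hj).2)) hmem
    have hzA : z ∈ A i := ⟨⟨hz.1, le_trans hz.2 (hξIcc j hj).2⟩, hgz⟩
    exact le_trans (csInf_le (hbddA i) hzA) hz.2
  set B : ℕ → Set ℝ := fun j => {x ∈ Icc s (ξ (j+1)) | g x = lev j} with hBdef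
  set σ : ℕ → ℝ := fun j => sSup (B j) with hσdef
  have hσmem : ∀ j, j + 1 ≤ m → σ j ∈ B j := by
    intro j hj
    have hsub : Icc s (ξ (j+1)) ⊆ Icc s t := Icc_subset_Icc le_rfl (hξIcc _ hj).2
    have hclosed : IsClosed (B j) := by
      have heq : B j = Icc s (ξ (j+1)) ∩ g ⁻¹' {lev j} := by ext x; simp [hBdef]
      rw [heq]
      exact (gcont.mono hsub).preimage_isClosed_of_isClosed isClosed_Icc isClosed_singleton
    have hne : (B j).Nonempty := by
      have hmem : lev j ∈ Icc (g s) (g (ξ (j+1))) := by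
        refine ⟨le_trans hgsc (hlevmem j (le_trans (Nat.le_succ j) hj)).1, ?_⟩
        rw [hgξ _ hj]; exact hlevmono (Nat.le_succ j)
      obtain ⟨z, hz, hgz⟩ := intermediate_value_Icc (hξIcc _ hj).1 (gcont.mono hsub) hmem
      exact ⟨z, hz, hgz⟩
    exact hclosed.csSup_mem hne ⟨ξ (j+1), fun x hx => hx.1.2⟩
  have hgσ : ∀ j, j + 1 ≤ m → g (σ j) = lev j := fun j hj => (hσmem j hj).2
  have hσIcc : ∀ j, j + 1 ≤ m → σ j ∈ Icc s (ξ (j+1)) := fun j hj => (hσmem j hj).1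
  have hlevlt : ∀ j, lev j < lev (j+1) := fun j => by
    have := hlevstep j; linarith
  have hσlt : ∀ j, j + 1 ≤ m → σ j < ξ (j+1) := by
    intro j hj
    rcases lt_or_eq_of_le (hσIcc j hj).2 with h1 | h1
    · exact h1
    · exfalso
      have := hgσ j hj
      rw [h1, hgξ _ hj] at this
      exact absurd this.symm (ne_of_lt (hlevlt j))
  have hξσ : ∀ j, j + 1 ≤ m → ξ j ≤ σ j := by
    intro j hj
    refine le_csSup ⟨ξ (j+1), fun x hx => hx.1.2⟩ ?_
    refine ⟨⟨(hξIcc j (le_trans (Nat.le_succ j) hj)).1, hξmono j (j+1) (Nat.le_succ j) hj⟩,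
      hgξ j (le_trans (Nat.le_succ j) hj)⟩
  have hrange : ∀ j, j + 1 ≤ m → ∀ x ∈ Icc (σ j) (ξ (j+1)),
      lev j ≤ g x ∧ g x ≤ lev (j+1) := by
    intro j hj x hx
    have hσs : s ≤ σ j := (hσIcc j hj).1
    have hξt : ξ (j+1) ≤ t := (hξIcc _ hj).2
    constructor
    · by_contra hlt
      push_neg at hlt
      have hxσ : σ j < x := by
        rcases lt_or_eq_of_le hx.1 with h1 | h1
        · exact h1
        · exfalso; rw [← h1, hgσ j hj] at hlt; exact absurd hlt (lt_irrefl _)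
      have hsub : Icc x (ξ (j+1)) ⊆ Icc s t :=
        Icc_subset_Icc (le_trans hσs hx.1) hξt
      have hmem : lev j ∈ Icc (g x) (g (ξ (j+1))) :=
        ⟨hlt.le, by rw [hgξ _ hj]; exact hlevmono (Nat.le_succ j)⟩
      obtain ⟨z, hz, hgz⟩ := intermediate_value_Icc hx.2 (gcont.mono hsub) hmem
      have hzB : z ∈ B j := ⟨⟨le_trans (le_trans hσs hx.1) hz.1, hz.2⟩, hgz⟩
      have := le_csSup (⟨ξ (j+1), fun y hy => hy.1.2⟩ : BddAbove (B j)) hzB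
      have : x ≤ σ j := le_trans hz.1 this
      exact absurd this (not_le.2 hxσ)
    · by_contra hlt
      push_neg at hlt
      have hxξ : x < ξ (j+1) := by
        rcases lt_or_eq_of_le hx.2 with h1 | h1
        · exact h1
        · exfalso; rw [h1, hgξ _ hj] at hlt; exact absurd hlt (lt_irrefl _)
      have hsub : Icc (σ j) x ⊆ Icc s t :=
        Icc_subset_Icc hσs (le_trans hx.2 hξt)
      have hmem : lev (j+1) ∈ Icc (g (σ j)) (g x) :=
        ⟨by rw [hgσ j hj]; exact (hlevlt j).le, hlt.le⟩
      obtain ⟨z, hz, hgz⟩ := intermediate_value_Icc hx.1 (gcont.mono hsub) hmem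
      have hzA : z ∈ A (j+1) :=
        ⟨⟨le_trans hσs hz.1, le_trans hz.2 (le_trans hx.2 hξt)⟩, hgz⟩
      have := csInf_le (hbddA (j+1)) hzA
      have : ξ (j+1) ≤ x := le_trans this hz.2
      exact absurd this (not_le.2 hxξ)
  -- per-interval energy lower bound
  set mj : ℕ → ℝ := fun j => min (1 - (lev j)^2) (1 - (lev (j+1))^2) with hmjdef
  have hmj0 : ∀ j, j+1 ≤ m → 0 ≤ mj j := by
    intro j hj
    have h1 := hlevmem j (le_trans (Nat.le_succ j) hj)
    have h2 := hlevmem (j+1) hj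
    exact le_min (aux_one_sub_sq_nonneg hc1 h1.1 h1.2) (aux_one_sub_sq_nonneg hc1 h2.1 h2.2)
  have hσξIoo : ∀ j, j + 1 ≤ m → σ j ∈ Ioo a b ∧ ξ (j+1) ∈ Ioo a b := by
    intro j hj
    constructor
    · exact hIcc ⟨(hσIcc j hj).1, le_trans (hσIcc j hj).2 (hξIcc _ hj).2⟩
    · exact hIcc (hξIcc _ hj)
  have hkey : ∀ j, j+1 ≤ m →
      ENNReal.ofReal (2 * mj j * h) ≤
      ∫⁻ x in Ioo (σ j) (ξ (j+1)),
        ENNReal.ofReal (ε⁻¹ * ((g x)^2 - 1)^2 + ε * (g' x)^2) := by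
    intro j hj
    have hIsub : Ioo (σ j) (ξ (j+1)) ⊆ Icc s t := fun x hx =>
      ⟨le_trans (hσIcc j hj).1 hx.1.le, le_trans hx.2.le (hξIcc _ hj).2⟩
    have hpt : ∀ x ∈ Ioo (σ j) (ξ (j+1)),
        ENNReal.ofReal (2 * mj j) * ENNReal.ofReal (|g' x|) ≤
        ENNReal.ofReal (ε⁻¹ * ((g x)^2 - 1)^2 + ε * (g' x)^2) := by
      intro x hx
      rw [← ENNReal.ofReal_mul (by linarith [hmj0 j hj])]
      apply ENNReal.ofReal_le_ofReal
      have hr := hrange j hj x (Ioo_subset_Icc_self hx)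
      have h1 := hlevmem j (le_trans (Nat.le_succ j) hj)
      have h2 := hlevmem (j+1) hj
      have habs : mj j ≤ |(g x)^2 - 1| := by
        have hgx1 : -c ≤ g x := le_trans h1.1 hr.1
        have hgx2 : g x ≤ c := le_trans hr.2 h2.2
        have heq : |(g x)^2 - 1| = 1 - (g x)^2 := by
          rw [abs_sub_comm, abs_of_nonneg (aux_one_sub_sq_nonneg hc1 hgx1 hgx2)]
        rw [heq]
        rcases le_or_gt 0 (g x) with h0 | h0
        · exact le_trans (min_le_right _ _) (aux_sq_mono_pos h0 hr.2)
        · exact le_trans (min_le_left _ _) (aux_sq_mono_neg h0 hr.1)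
      calc 2 * mj j * |g' x| ≤ 2 * (|(g x)^2 - 1| * |g' x|) := by
            rw [mul_assoc]
            exact mul_le_mul_of_nonneg_left
              (mul_le_mul_of_nonneg_right habs (abs_nonneg _)) (by norm_num)
        _ ≤ ε⁻¹ * ((g x)^2 - 1)^2 + ε * (g' x)^2 := young hε
    have hg'i : IntegrableOn (fun x => |g' x|) (Ioo (σ j) (ξ (j+1))) :=
      ((hint'.mono_set hIsub)).abs
    have step1 : ENNReal.ofReal (2 * mj j) * ∫⁻ x in Ioo (σ j) (ξ (j+1)),
        ENNReal.ofReal (|g' x|) ≤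
        ∫⁻ x in Ioo (σ j) (ξ (j+1)),
          ENNReal.ofReal (ε⁻¹ * ((g x)^2 - 1)^2 + ε * (g' x)^2) := by
      rw [← lintegral_const_mul' _ _ ENNReal.ofReal_ne_top]
      exact setLIntegral_mono' measurableSet_Ioo hpt
    have step2 : ∫⁻ x in Ioo (σ j) (ξ (j+1)), ENNReal.ofReal (|g' x|) =
        ENNReal.ofReal (∫ x in Ioo (σ j) (ξ (j+1)), |g' x|) :=
      (ofReal_integral_eq_lintegral_ofReal hg'i
        (Eventually.of_forall fun x => abs_nonneg _)).symm
    have step3 : h ≤ ∫ x in Ioo (σ j) (ξ (j+1)), |g' x| := by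
      have hFT : g (ξ (j+1)) - g (σ j) = ∫ u in (σ j)..(ξ (j+1)), g' u :=
        hFTC (σ j) (hσξIoo j hj).1 (ξ (j+1)) (hσξIoo j hj).2
      rw [hgξ _ hj, hgσ j hj] at hFT
      have hFT2 : lev (j+1) - lev j = ∫ u in Ioo (σ j) (ξ (j+1)), g' u := by
        rw [hFT, intervalIntegral.integral_of_le (hσlt j hj).le,
          integral_Ioc_eq_integral_Ioo]
      have habs2 : |∫ u in Ioo (σ j) (ξ (j+1)), g' u| ≤
          ∫ u in Ioo (σ j) (ξ (j+1)), |g' u| := by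
        simpa [Real.norm_eq_abs] using
          norm_integral_le_integral_norm (μ := volume.restrict (Ioo (σ j) (ξ (j+1)))) g'
      calc h = lev (j+1) - lev j := (hlevstep j).symm
        _ ≤ |∫ u in Ioo (σ j) (ξ (j+1)), g' u| := by
            rw [← hFT2]; exact le_abs_self _
        _ ≤ _ := habs2
    calc ENNReal.ofReal (2 * mj j * h) = ENNReal.ofReal (2 * mj j) * ENNReal.ofReal h := by
          rw [← ENNReal.ofReal_mul (by linarith [hmj0 j hj])]
      _ ≤ ENNReal.ofReal (2 * mj j) *
          ENNReal.ofReal (∫ x in Ioo (σ j) (ξ (j+1)), |g' x|) := by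
          exact mul_le_mul_right (ENNReal.ofReal_le_ofReal step3) _
      _ = ENNReal.ofReal (2 * mj j) * ∫⁻ x in Ioo (σ j) (ξ (j+1)),
          ENNReal.ofReal (|g' x|) := by rw [step2]
      _ ≤ _ := step1
  -- summation over the m disjoint intervals
  have hdisj : (↑(Finset.range m) : Set ℕ).PairwiseDisjoint
      (fun j => Ioo (σ j) (ξ (j+1))) := by
    have key : ∀ i j, i ∈ Finset.range m → j ∈ Finset.range m → i < j →
        Disjoint (Ioo (σ i) (ξ (i+1))) (Ioo (σ j) (ξ (j+1))) := by
      intro i j hi hj hij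
      rw [Finset.mem_range] at hi hj
      have h1 : ξ (i+1) ≤ ξ j := hξmono (i+1) j hij (le_of_lt hj)
      have h2 : ξ j ≤ σ j := hξσ j hj
      rw [Set.disjoint_left]
      intro x hx hx'
      exact absurd (lt_of_lt_of_le hx.2 (le_trans h1 h2)) (not_lt.2 hx'.1.le)
    intro i hi j hj hij
    rcases lt_or_gt_of_ne hij with hlt | hgt
    · exact key i j hi hj hlt
    · exact (key j i hj hi hgt).symm
  have hsum1 : ∑ j ∈ Finset.range m, ENNReal.ofReal (2 * mj j * h) ≤
      ∫⁻ x in Ioo s t, ENNReal.ofReal (ε⁻¹ * ((g x)^2 - 1)^2 + ε * (g' x)^2) := by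
    calc ∑ j ∈ Finset.range m, ENNReal.ofReal (2 * mj j * h)
        ≤ ∑ j ∈ Finset.range m, ∫⁻ x in Ioo (σ j) (ξ (j+1)),
            ENNReal.ofReal (ε⁻¹ * ((g x)^2 - 1)^2 + ε * (g' x)^2) := by
          apply Finset.sum_le_sum
          intro j hj
          exact hkey j (Finset.mem_range.1 hj)
      _ = ∫⁻ x in ⋃ j ∈ Finset.range m, Ioo (σ j) (ξ (j+1)),
            ENNReal.ofReal (ε⁻¹ * ((g x)^2 - 1)^2 + ε * (g' x)^2) :=
          (lintegral_biUnion_finset hdisj (fun j _ => measurableSet_Ioo) _).symm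
      _ ≤ _ := by
          apply lintegral_mono_set
          apply Set.iUnion₂_subset
          intro j hj
          rw [Finset.mem_range] at hj
          intro x hx
          exact ⟨lt_of_le_of_lt (hσIcc j hj).1 hx.1, lt_of_lt_of_le hx.2 (hξIcc _ hj).2⟩
  -- the Riemann-sum algebra
  have hIj : ∀ j, j+1 ≤ m →
      (∫ x in (lev j)..(lev (j+1)), (1 - x^2)) ≤ mj j * h + 2*h^2 := by
    intro j hj
    have h1 := hlevmem j (le_trans (Nat.le_succ j) hj)
    have h2 := hlevmem (j+1) hj
    have hstep := hlevstep j
    have hle : lev j ≤ lev (j+1) := (hlevlt j).le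
    have hmono : (∫ x in (lev j)..(lev (j+1)), (1 - x^2)) ≤
        ∫ _x in (lev j)..(lev (j+1)), (mj j + 2*h) := by
      apply intervalIntegral.integral_mono_on hle
      · exact ((continuous_const.sub (continuous_pow 2)).intervalIntegrable _ _)
      · exact intervalIntegrable_const
      · intro x hx
        have hb1 : 1 - x^2 ≤ (1 - (lev j)^2) + 2*h :=
          aux_osc1 hx.1 hx.2 hstep h1.1 h2.2 hc1.le
        have hb2 : 1 - x^2 ≤ (1 - (lev (j+1))^2) + 2*h :=
          aux_osc2 hx.1 hx.2 hstep h1.1 h2.2 hc1.le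
        rcases min_cases (1 - (lev j)^2) (1 - (lev (j+1))^2) with ⟨hmin, _⟩ | ⟨hmin, _⟩ <;>
          simp only [hmjdef, hmin] <;> linarith
    rw [intervalIntegral.integral_const, hstep, smul_eq_mul] at hmono
    linarith [hmono]
  have hsum_int : ∑ j ∈ Finset.range m, (∫ x in (lev j)..(lev (j+1)), (1 - x^2)) =
      ∫ x in (-c)..c, (1 - x^2) := by
    rw [← hlev0, ← hlevm]
    exact intervalIntegral.sum_integral_adjacent_intervals fun k _ =>
      ((continuous_const.sub (continuous_pow 2)).intervalIntegrable _ _)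
  have hval : (∫ x in (-c)..c, (1 - x^2)) = 2*c - 2*c^3/3 := by
    rw [intervalIntegral.integral_sub intervalIntegrable_const
      ((continuous_pow 2).intervalIntegrable _ _)]
    simp [integral_pow]
    ring
  have halg : 8/3 - η ≤ ∑ j ∈ Finset.range m, 2 * mj j * h := by
    have hlow : ∀ j ∈ Finset.range m,
        (∫ x in (lev j)..(lev (j+1)), (1 - x^2)) - 2*h^2 ≤ mj j * h := by
      intro j hj
      have := hIj j (Finset.mem_range.1 hj)
      linarith
    have hsum2 : (2*c - 2*c^3/3) - 2*h^2*m ≤ ∑ j ∈ Finset.range m, mj j * h := by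
      calc (2*c - 2*c^3/3) - 2*h^2*m
          = ∑ j ∈ Finset.range m, ((∫ x in (lev j)..(lev (j+1)), (1 - x^2)) - 2*h^2) := by
            rw [Finset.sum_sub_distrib, hsum_int, hval, Finset.sum_const, Finset.card_range]
            push_cast
            ring
        _ ≤ _ := Finset.sum_le_sum hlow
    have hsum3 : ∑ j ∈ Finset.range m, 2 * mj j * h
        = 2 * ∑ j ∈ Finset.range m, mj j * h := by
      rw [Finset.mul_sum]
      congr 1
      ext j
      ring
    rw [hsum3]
    have hh2m : h^2 * m ≤ 2*h := by
      have : h^2 * m = h * (h * m) := by ring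
      rw [this, hhm]
      nlinarith
    have hcval : 8/3 - η/4 ≤ 2*(2*c - 2*c^3/3) := by
      rw [hcdef, hδdef]
      have := aux_cval (d := η/16) (by positivity) (by linarith)
      linarith
    linarith [hsum2, hh2m, hh', hh0]
  refine le_trans ?_ hsum1
  rw [← ENNReal.ofReal_sum_of_nonneg]
  · apply ENNReal.ofReal_le_ofReal halg
  · intro j hj
    have := hmj0 j (Finset.mem_range.1 hj)
    positivity

lemma lemmaMM2 {η : ℝ} (hη : 0 < η) (hη1 : η ≤ 1) :
    ∃ δ : ℝ, 0 < δ ∧ δ < 1 ∧ ∀ (a b ε : ℝ) (g g' : ℝ → ℝ), 0 < ε →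
    (∀ x ∈ Ioo a b, ∀ y ∈ Ioo a b, g y - g x = ∫ t in x..y, g' t) →
    IntegrableOn g' (Ioo a b) →
    ∀ s t : ℝ, s ∈ Ioo a b → t ∈ Ioo a b → s < t →
    ((|g s + 1| < δ ∧ |g t - 1| < δ) ∨ (|g s - 1| < δ ∧ |g t + 1| < δ)) →
    ENNReal.ofReal (8/3 - η) ≤
      ∫⁻ x in Ioo s t, ENNReal.ofReal (ε⁻¹ * ((g x)^2 - 1)^2 + ε * (g' x)^2) := by
  obtain ⟨δ, hδ0, hδ1, hMM⟩ := lemmaMM hη hη1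
  refine ⟨δ, hδ0, hδ1, ?_⟩
  intro a b ε g g' hε hFTC hint s t hs ht hst hor
  rcases hor with ⟨h1, h2⟩ | ⟨h1, h2⟩
  · apply hMM a b ε g g' hε hFTC hint s t hs ht hst
    · rw [abs_lt] at h1; linarith [h1.2]
    · rw [abs_lt] at h2; linarith [h2.1]
  · have hFTCneg : ∀ x ∈ Ioo a b, ∀ y ∈ Ioo a b,
        (fun z => -g z) y - (fun z => -g z) x = ∫ t in x..y, (fun z => -g' z) t := by
      intro x hx y hy
      have := hFTC x hx y hy
      simp only [intervalIntegral.integral_neg]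
      linarith [this]
    have hres := hMM a b ε (fun z => -g z) (fun z => -g' z) hε hFTCneg hint.neg
      s t hs ht hst (by rw [abs_lt] at h1; linarith [h1.1])
      (by rw [abs_lt] at h2; linarith [h2.2])
    have heq : (fun x => ENNReal.ofReal (ε⁻¹ * (((fun z => -g z) x)^2 - 1)^2 +
        ε * ((fun z => -g' z) x)^2)) =
        fun x => ENNReal.ofReal (ε⁻¹ * ((g x)^2 - 1)^2 + ε * (g' x)^2) := by
      funext x; dsimp only; ring_nf
    rw [heq] at hres
    exact hres

lemma lemmaR {a b : ℝ} {D : Set ℝ} (hD : D ⊆ Ioo a b)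
    (hdense : ∀ x ∈ Ioo a b, ∀ r > 0, ∃ y ∈ D, |y - x| < r)
    (f : ℝ → ℝ) (hf : ∀ x ∈ D, f x = -1 ∨ f x = 1) :
    ∃ ft : ℝ → ℝ, (∀ x ∈ D, ft x = f x) ∧
      eVariationOn ft (Ioo a b) ≤ eVariationOn f D := by
  classical
  set One : Set ℝ := {y ∈ D | f y = 1} with hOne
  set ft : ℝ → ℝ := fun x => if x ∈ D then f x else (if x ∈ closure One then 1 else -1)
    with hft
  have hftD : ∀ x ∈ D, ft x = f x := fun x hx => by simp [hft, hx]
  refine ⟨ft, hftD, ?_⟩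
  have hnear : ∀ x ∈ Ioo a b, ∀ r > 0, ∃ y, y ∈ D ∧ |y - x| < r ∧ f y = ft x := by
    intro x hx r hr
    by_cases hxD : x ∈ D
    · exact ⟨x, hxD, by simpa using hr, (hftD x hxD).symm⟩
    · by_cases hxc : x ∈ closure One
      · obtain ⟨y, hy1, hy2⟩ := Metric.mem_closure_iff.1 hxc r hr
        refine ⟨y, hy1.1, ?_, ?_⟩
        · rw [abs_sub_comm]; exact hy2
        · rw [hy1.2, hft]; simp [hxD, hxc]
      · have hxc2 := hxc
        rw [Metric.mem_closure_iff] at hxc2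
        push_neg at hxc2
        obtain ⟨ε, hε, hball⟩ := hxc2
        obtain ⟨y, hyD, hyx⟩ := hdense x hx (min r ε) (lt_min hr hε)
        refine ⟨y, hyD, lt_of_lt_of_le hyx (min_le_left _ _), ?_⟩
        have hy1 : f y ≠ 1 := by
          intro h1
          have : y ∈ One := ⟨hyD, h1⟩
          have := hball y this
          rw [Real.dist_eq, abs_sub_comm] at this
          exact absurd (lt_of_lt_of_le hyx (min_le_right _ _)) (not_lt.2 this)
        have := hf y hyD
        rcases this with h | h
        · rw [h, hft]; simp [hxD, hxc]
        · exact absurd h hy1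
  -- now bound the variation
  rw [eVariationOn]
  apply iSup_le
  rintro ⟨n, u, hu, us⟩
  dsimp only
  -- minimal gap
  set F : Finset ℝ := (Finset.range (n+1)).image u with hF
  set G : Finset ℝ := ((F ×ˢ F).image fun p => p.2 - p.1).filter (fun d => 0 < d) with hG
  set r₀ : ℝ := if hGne : G.Nonempty then (G.min' hGne)/2 else 1 with hr₀
  have hr₀pos : 0 < r₀ := by
    rw [hr₀]
    split_ifs with hGne
    · have hpos : ∀ d ∈ G, 0 < d := fun d hd => (Finset.mem_filter.1 hd).2
      linarith [hpos _ (G.min'_mem hGne)]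
    · norm_num
  have hgap : ∀ i j, i ≤ n → j ≤ n → u i < u j → 2*r₀ ≤ u j - u i := by
    intro i j hi hj hij
    have hmem : u j - u i ∈ G := by
      rw [hG]
      refine Finset.mem_filter.2 ⟨?_, by simp [hij]⟩
      apply Finset.mem_image.2
      exact ⟨(u i, u j), Finset.mem_product.2 ⟨Finset.mem_image.2 ⟨i, by simp [Nat.lt_succ_iff, hi]⟩,
        Finset.mem_image.2 ⟨j, by simp [Nat.lt_succ_iff, hj]⟩⟩, rfl⟩
    have hGne : G.Nonempty := ⟨_, hmem⟩
    rw [hr₀, dif_pos hGne]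
    have := G.min'_le _ hmem
    linarith
  -- choice of nearby points in D
  have H : ∀ x : ℝ, ∃ y : ℝ, x ∈ Ioo a b → y ∈ D ∧ |y - x| < r₀ ∧ f y = ft x := by
    intro x
    by_cases hx : x ∈ Ioo a b
    · obtain ⟨y, h1, h2, h3⟩ := hnear x hx r₀ hr₀pos
      exact ⟨y, fun _ => ⟨h1, h2, h3⟩⟩
    · exact ⟨x, fun h => absurd h hx⟩
  choose yfun hyfun using H
  set Y : ℕ → ℝ := fun i => yfun (u (min i n)) with hY
  have hYprop : ∀ i, Y i ∈ D ∧ |Y i - u (min i n)| < r₀ ∧ f (Y i) = ft (u (min i n)) :=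
    fun i => hyfun (u (min i n)) (us (min i n))
  have hYmono : Monotone Y := by
    intro i j hij
    have hmin : min i n ≤ min j n := min_le_min hij le_rfl
    rcases lt_or_eq_of_le (hu hmin) with hlt | heq
    · have hg := hgap (min i n) (min j n) (min_le_right _ _) (min_le_right _ _) hlt
      have h1 := (hYprop i).2.1
      have h2 := (hYprop j).2.1
      rw [abs_lt] at h1 h2
      linarith [h1.1, h1.2, h2.1, h2.2]
    · show yfun (u (min i n)) ≤ yfun (u (min j n))
      rw [heq]
  have hYD : ∀ i, Y i ∈ D := fun i => (hYprop i).1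
  calc ∑ i ∈ Finset.range n, edist (ft (u (i+1))) (ft (u i))
      = ∑ i ∈ Finset.range n, edist (f (Y (i+1))) (f (Y i)) := by
        apply Finset.sum_congr rfl
        intro i hi
        rw [Finset.mem_range] at hi
        have e1 : f (Y (i+1)) = ft (u (min (i+1) n)) := (hYprop (i+1)).2.2
        have e2 : f (Y i) = ft (u (min i n)) := (hYprop i).2.2
        rw [e1, e2, min_eq_left hi, min_eq_left hi.le]
    _ ≤ eVariationOn f D := eVariationOn.sum_le (f := f) (n := n) hYmono hYD

lemma wMeas {a b : ℝ} {w : ℝ → ℝ} (hwBV : BoundedVariationOn w (Ioo a b)) :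
    AEStronglyMeasurable w (volume.restrict (Ioo a b)) := by
  obtain ⟨p, q, hp, hq, hpq⟩ :=
    hwBV.locallyBoundedVariationOn.exists_monotoneOn_sub_monotoneOn
  have hpm : AEMeasurable p (volume.restrict (Ioo a b)) :=
    aemeasurable_restrict_of_monotoneOn measurableSet_Ioo hp
  have hqm : AEMeasurable q (volume.restrict (Ioo a b)) :=
    aemeasurable_restrict_of_monotoneOn measurableSet_Ioo hq
  have : AEMeasurable w (volume.restrict (Ioo a b)) := by
    rw [hpq]; exact hpm.sub hqm
  exact this.aestronglyMeasurable

lemma ae_conv {a b p : ℝ} (hp1 : 1 ≤ p) {u : ℕ → ℝ → ℝ} {v w : ℝ → ℝ}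
    (hmeas : ∀ n, AEStronglyMeasurable (u n) (volume.restrict (Ioo a b)))
    (hw : AEStronglyMeasurable w (volume.restrict (Ioo a b)))
    (hwv : w =ᵐ[volume.restrict (Ioo a b)] v)
    (hconv : Tendsto (fun n => eLpNorm (fun x => u n x - v x) (ENNReal.ofReal p)
      (volume.restrict (Ioo a b))) atTop (𝓝 0)) :
    ∃ ψ : ℕ → ℕ, StrictMono ψ ∧ ∀ᵐ x ∂(volume.restrict (Ioo a b)),
      Tendsto (fun k => u (ψ k) x) atTop (𝓝 (w x)) := by
  have hp0 : (ENNReal.ofReal p) ≠ 0 := by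
    simp only [ne_eq, ENNReal.ofReal_eq_zero, not_le]; linarith
  have hconv' : Tendsto (fun n => eLpNorm (u n - w) (ENNReal.ofReal p)
      (volume.restrict (Ioo a b))) atTop (𝓝 0) := by
    have : ∀ n, eLpNorm (u n - w) (ENNReal.ofReal p) (volume.restrict (Ioo a b)) =
        eLpNorm (fun x => u n x - v x) (ENNReal.ofReal p) (volume.restrict (Ioo a b)) := by
      intro n
      apply eLpNorm_congr_ae
      filter_upwards [hwv] with x hx
      simp [hx]
    simpa only [this] using hconv
  exact (tendstoInMeasure_of_tendsto_eLpNorm hp0 hmeas hw hconv').exists_seq_tendsto_ae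


end Helpers

set_option maxHeartbeats 1000000 in
/-- Compactness for the first-order problem, part (ii).
With the hypotheses of Statement 1, any `u ∈ BPV(Ω;{-1,1})` which is an `L^p(Ω)`
limit of a subsequence of `uₙ` satisfies `essVar_Ω u ≤ (3/4)·C`. -/
theorem statement_2 (a b p : ℝ) (hab : a < b) (hp1 : 1 ≤ p)
    (ε : ℕ → ℝ) (hεpos : ∀ n, 0 < ε n) (hε0 : Tendsto ε atTop (𝓝 0))
    (u u' : ℕ → ℝ → ℝ)
    (hW : ∀ n, IsW1On (Set.Ioo a b) (ENNReal.ofReal p) (u n) (u' n))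
    (C : ℝ)
    (hC : ∀ n, (∫⁻ x in Set.Ioo a b,
        ENNReal.ofReal ((ε n)⁻¹ * ((u n x) ^ 2 - 1) ^ 2 + ε n * (u' n x) ^ 2))
        ≤ ENNReal.ofReal C)
    (v w : ℝ → ℝ)
    (hw : ∀ x ∈ Set.Ioo a b, w x = -1 ∨ w x = 1)
    (hwBV : BoundedVariationOn w (Set.Ioo a b))
    (hwv : w =ᵐ[volume.restrict (Set.Ioo a b)] v)
    (φ : ℕ → ℕ) (hφ : StrictMono φ)
    (hconv : TendstoLp (Set.Ioo a b) p (fun k => u (φ k)) v) :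
    essVar (Set.Ioo a b) v ≤ ENNReal.ofReal (3 / 4 * C) := by
  classical
  haveI hfin : IsFiniteMeasure (volume.restrict (Set.Ioo a b)) := by
    constructor
    rw [Measure.restrict_apply_univ, Real.volume_Ioo]
    exact ENNReal.ofReal_lt_top
  have hmeasn : ∀ n, AEStronglyMeasurable (u n) (volume.restrict (Set.Ioo a b)) :=
    fun n => ((hW n).2.1).aestronglyMeasurable
  have hintn : ∀ n, IntegrableOn (u' n) (Set.Ioo a b) := by
    intro n
    have h1 : (1:ℝ≥0∞) ≤ ENNReal.ofReal p := ENNReal.one_le_ofReal.2 hp1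
    exact memLp_one_iff_integrable.1 ((hW n).2.2.mono_exponent h1)
  have hFTCn : ∀ n, ∀ x ∈ Set.Ioo a b, ∀ y ∈ Set.Ioo a b,
      u n y - u n x = ∫ t in x..y, u' n t :=
    fun n x hx y hy => (hW n).1 x hx y hy (Set.ordConnected_Ioo.uIcc_subset hx hy)
  obtain ⟨ψ, hψ, hae⟩ := ae_conv hp1 (fun k => hmeasn (φ k)) (wMeas hwBV) hwv hconv
  rw [ae_iff] at hae
  obtain ⟨Z, hEZ, hZm, hZ0⟩ := exists_measurable_superset_of_null hae
  set D : Set ℝ := Set.Ioo a b \ Z with hD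
  have hDsub : D ⊆ Set.Ioo a b := diff_subset
  have hconvD : ∀ x ∈ D, Tendsto (fun k => u (φ (ψ k)) x) atTop (𝓝 (w x)) := by
    intro x hx
    by_contra hc
    exact hx.2 (hEZ hc)
  have hZS : volume (Z ∩ Set.Ioo a b) = 0 := by
    rw [← Measure.restrict_apply hZm]; exact hZ0
  have hdense : ∀ x ∈ Set.Ioo a b, ∀ r > 0, ∃ y ∈ D, |y - x| < r := by
    intro x hx r hr
    by_contra hno
    push_neg at hno
    have hI : Set.Ioo (max a (x - r)) (min b (x + r)) ⊆ Z ∩ Set.Ioo a b := by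
      intro y hy
      have hyS : y ∈ Set.Ioo a b :=
        ⟨lt_of_le_of_lt (le_max_left _ _) hy.1, lt_of_lt_of_le hy.2 (min_le_left _ _)⟩
      have hyx : |y - x| < r := by
        rw [abs_lt]
        constructor
        · have := lt_of_le_of_lt (le_max_right _ _) hy.1; linarith
        · have := lt_of_lt_of_le hy.2 (min_le_right _ _); linarith
      refine ⟨?_, hyS⟩
      by_contra hyZ
      exact absurd hyx (not_lt.2 (hno y ⟨hyS, hyZ⟩))
    have hI0 : volume (Set.Ioo (max a (x - r)) (min b (x + r))) = 0 :=
      measure_mono_null hI hZS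
    rw [Real.volume_Ioo] at hI0
    have hlt : max a (x - r) < min b (x + r) := by
      apply max_lt <;> apply lt_min
      · exact hab
      · linarith [hx.1]
      · linarith [hx.2]
      · linarith
    rw [ENNReal.ofReal_eq_zero] at hI0
    linarith
  obtain ⟨ft, hftD, hftvar⟩ := lemmaR hDsub hdense w (fun x hx => hw x (hDsub hx))
  have h1 : essVar (Set.Ioo a b) v ≤ eVariationOn ft (Set.Ioo a b) := by
    have hft_w : ft =ᵐ[volume.restrict (Set.Ioo a b)] w := by
      rw [EventuallyEq, ae_iff]
      have hsub : {y | ¬ ft y = w y} ⊆ Z ∪ (Set.Ioo a b)ᶜ := by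
        intro y hy
        simp only [mem_setOf_eq] at hy
        by_contra hnot
        rw [mem_union, not_or, notMem_compl_iff] at hnot
        exact hy (hftD y ⟨hnot.2, hnot.1⟩)
      have hnull : (volume.restrict (Set.Ioo a b)) (Z ∪ (Set.Ioo a b)ᶜ) = 0 := by
        apply measure_union_null hZ0
        rw [Measure.restrict_apply (measurableSet_Ioo.compl)]
        simp
      exact measure_mono_null hsub hnull
    have hae2 : ft =ᵐ[volume.restrict (Set.Ioo a b)] v := hft_w.trans hwv
    unfold essVar
    exact iInf_le_of_le ft (iInf_le_of_le hae2 le_rfl)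
  refine h1.trans (hftvar.trans ?_)
  -- core bound : eVariationOn w D ≤ 3/4 C
  rw [eVariationOn]
  apply iSup_le
  rintro ⟨n, x, hxmono, hxD⟩
  dsimp only
  set J := (Finset.range n).filter (fun i => w (x (i+1)) ≠ w (x i)) with hJ
  have hwpm : ∀ i, w (x i) = -1 ∨ w (x i) = 1 := fun i => hw _ (hDsub (hxD i))
  have hterm : ∀ i ∈ J, edist (w (x (i+1))) (w (x i)) = ENNReal.ofReal 2 := by
    intro i hi
    have hne := (Finset.mem_filter.1 hi).2
    rw [edist_dist, Real.dist_eq]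
    rcases hwpm (i+1) with h1 | h1 <;> rcases hwpm i with h2 | h2 <;>
      rw [h1, h2] at hne ⊢ <;> first | (exact absurd rfl hne) | norm_num
  have hsum : ∑ i ∈ Finset.range n, edist (w (x (i+1))) (w (x i))
      = J.card * ENNReal.ofReal 2 := by
    rw [← Finset.sum_filter_add_sum_filter_not (Finset.range n)
      (fun i => w (x (i+1)) ≠ w (x i)) (fun i => edist (w (x (i+1))) (w (x i)))]
    have hz : ∑ i ∈ (Finset.range n).filter (fun i => ¬ w (x (i+1)) ≠ w (x i)),
        edist (w (x (i+1))) (w (x i)) = 0 := by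
      apply Finset.sum_eq_zero
      intro i hi
      have h := (Finset.mem_filter.1 hi).2
      push_neg at h
      rw [h, edist_self]
    rw [hz, add_zero, Finset.sum_congr rfl hterm, Finset.sum_const, nsmul_eq_mul]
  rw [hsum]
  -- key cardinality estimate
  have hcard : ∀ η : ℝ, 0 < η → η ≤ 1 →
      (J.card : ℝ≥0∞) * ENNReal.ofReal (8/3 - η) ≤ ENNReal.ofReal C := by
    intro η hη hη1
    obtain ⟨δ, hδ0, hδ1, hMM⟩ := lemmaMM2 hη hη1
    have hev : ∀ᶠ k in atTop, ∀ i ∈ Finset.range (n+1),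
        |u (φ (ψ k)) (x i) - w (x i)| < δ := by
      rw [eventually_all_finset]
      intro i _
      have htt := hconvD (x i) (hxD i)
      have h2 := Metric.tendsto_nhds.1 htt δ hδ0
      filter_upwards [h2] with k hk
      rw [Real.dist_eq] at hk; exact hk
    obtain ⟨k, hk⟩ := hev.exists
    set N := φ (ψ k) with hN
    have hjump : ∀ i ∈ J, ENNReal.ofReal (8/3 - η) ≤
        ∫⁻ y in Set.Ioo (x i) (x (i+1)),
          ENNReal.ofReal ((ε N)⁻¹ * ((u N y)^2 - 1)^2 + ε N * (u' N y)^2) := by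
      intro i hi
      obtain ⟨hiJ, hne⟩ := Finset.mem_filter.1 hi
      rw [Finset.mem_range] at hiJ
      have hxi : x i < x (i+1) := by
        rcases lt_or_eq_of_le (hxmono (Nat.le_succ i)) with h | h
        · exact h
        · exfalso; rw [← h] at hne; exact hne rfl
      have hd1 := hk i (Finset.mem_range.2 (by omega))
      have hd2 := hk (i+1) (Finset.mem_range.2 (by omega))
      apply hMM a b (ε N) (u N) (u' N) (hεpos N) (hFTCn N) (hintn N)
        (x i) (x (i+1)) (hDsub (hxD i)) (hDsub (hxD (i+1))) hxi
      rcases hwpm i with h2 | h2 <;> rcases hwpm (i+1) with h1 | h1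
      · exfalso; rw [h1, h2] at hne; exact hne rfl
      · left
        constructor
        · rw [h2] at hd1; rw [abs_lt] at hd1 ⊢; constructor <;> linarith [hd1.1, hd1.2]
        · rw [h1] at hd2; rw [abs_lt] at hd2 ⊢; constructor <;> linarith [hd2.1, hd2.2]
      · right
        constructor
        · rw [h2] at hd1; rw [abs_lt] at hd1 ⊢; constructor <;> linarith [hd1.1, hd1.2]
        · rw [h1] at hd2; rw [abs_lt] at hd2 ⊢; constructor <;> linarith [hd2.1, hd2.2]
      · exfalso; rw [h1, h2] at hne; exact hne rfl
    have hdisj : (↑J : Set ℕ).PairwiseDisjoint (fun i => Set.Ioo (x i) (x (i+1))) := by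
      have key : ∀ i j : ℕ, i < j →
          Disjoint (Set.Ioo (x i) (x (i+1))) (Set.Ioo (x j) (x (j+1))) := by
        intro i j hij
        have : x (i+1) ≤ x j := hxmono hij
        rw [Set.disjoint_left]
        intro y hy hy'
        exact absurd (lt_of_lt_of_le hy.2 this) (not_lt.2 hy'.1.le)
      intro i _ j _ hij
      rcases lt_or_gt_of_ne hij with hlt | hgt
      · exact key i j hlt
      · exact (key j i hgt).symm
    calc (J.card : ℝ≥0∞) * ENNReal.ofReal (8/3 - η)
        = ∑ _i ∈ J, ENNReal.ofReal (8/3 - η) := by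
          rw [Finset.sum_const, nsmul_eq_mul]
      _ ≤ ∑ i ∈ J, ∫⁻ y in Set.Ioo (x i) (x (i+1)),
            ENNReal.ofReal ((ε N)⁻¹ * ((u N y)^2 - 1)^2 + ε N * (u' N y)^2) :=
          Finset.sum_le_sum hjump
      _ = ∫⁻ y in ⋃ i ∈ J, Set.Ioo (x i) (x (i+1)),
            ENNReal.ofReal ((ε N)⁻¹ * ((u N y)^2 - 1)^2 + ε N * (u' N y)^2) :=
          (lintegral_biUnion_finset hdisj (fun _ _ => measurableSet_Ioo) _).symm
      _ ≤ ∫⁻ y in Set.Ioo a b,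
            ENNReal.ofReal ((ε N)⁻¹ * ((u N y)^2 - 1)^2 + ε N * (u' N y)^2) := by
          apply lintegral_mono_set
          apply Set.iUnion₂_subset
          intro i _
          intro y hy
          exact ⟨(hDsub (hxD i)).1.trans hy.1, hy.2.trans (hDsub (hxD (i+1))).2⟩
      _ ≤ ENNReal.ofReal C := hC N
  -- conclude
  rcases Nat.eq_zero_or_pos J.card with h0 | hpos
  · rw [h0]; simp
  · have hJpos : (0:ℝ) < J.card := by exact_mod_cast hpos
    have hC8 : (J.card : ℝ) * (8/3) ≤ C := by
      by_contra hcon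
      push_neg at hcon
      set e : ℝ := (J.card : ℝ) * (8/3) - C with he
      have he0 : 0 < e := by rw [he]; linarith
      set η : ℝ := min 1 (e / (2 * (J.card : ℝ))) with hη
      have hη0 : 0 < η := lt_min one_pos (by positivity)
      have hη1 : η ≤ 1 := min_le_left _ _
      have h := hcard η hη0 hη1
      rw [← ENNReal.ofReal_natCast, ← ENNReal.ofReal_mul (by positivity)] at h
      have h83 : 0 < (J.card : ℝ) * (8/3 - η) := by
        apply mul_pos hJpos; linarith
      have hle : (J.card : ℝ) * (8/3 - η) ≤ C := by
        rcases ENNReal.ofReal_le_ofReal_iff'.1 h with h' | h'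
        · exact h'
        · linarith
      have hηe : (J.card : ℝ) * η ≤ e / 2 := by
        have hmin : η ≤ e / (2 * (J.card : ℝ)) := min_le_right _ _
        calc (J.card : ℝ) * η ≤ (J.card : ℝ) * (e / (2 * (J.card : ℝ))) :=
              mul_le_mul_of_nonneg_left hmin (by positivity)
          _ = e / 2 := by field_simp
      nlinarith [hle, hηe]
    calc (J.card : ℝ≥0∞) * ENNReal.ofReal 2 = ENNReal.ofReal ((J.card : ℝ) * 2) := by
          rw [ENNReal.ofReal_mul (by positivity), ENNReal.ofReal_natCast]
      _ ≤ ENNReal.ofReal (3/4*C) := ENNReal.ofReal_le_ofReal (by linarith)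


end
end
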